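/- arXiv:1103.2967 — 5 statements merged into one kernel-verified Lean document; each statement's English description precedes it below -/
import Mathlib

section
/- Let K and H be vertex-disjoint (2,1)-tight simple graphs, u ∈ V(K), v ∈ V(H), and let G be the graph with V(G) = V(K) ∪ V(H) and E(G) = E(K) ∪ E(H) ∪ {uv}. Then G is (2,1)-tight. -/
/-!
A subgraph `S` of the join restricts to subgraphs of `K` and of `H`; its vertices split between
them and its edges split between them, plus possibly the bridge `uv`. If `S` contains the bridge,
both restrictions have a vertex, so each satisfies `e + ℓ ≤ 2v` even when edgeless (as `ℓ ≤ 2`),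
and the one extra edge is paid for by the spare `ℓ ≥ 1`. Otherwise one restriction carries an
edge and the other has `e ≤ 2v`. The edge count of the whole join is `|E(K)| + |E(H)| + 1`,
which gives tightness for `ℓ = 1`.
-/

open SimpleGraph

def Sparse (ℓ : ℕ) {V : Type*} (G : SimpleGraph V) : Prop :=
  ∀ H : G.Subgraph, H.edgeSet.Nonempty → H.edgeSet.ncard + ℓ ≤ 2 * H.verts.ncard

def Tight (ℓ : ℕ) {V : Type*} (G : SimpleGraph V) : Prop :=
  Sparse ℓ G ∧ G.edgeSet.ncard + ℓ = 2 * Nat.card V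

/-- The edge joining move: the disjoint union of `K` and `H` together with the
single extra edge joining `u ∈ V(K)` to `v ∈ V(H)`. -/
def edgeJoin {A B : Type*} (K : SimpleGraph A) (H : SimpleGraph B) (u : A) (v : B) :
    SimpleGraph (A ⊕ B) :=
  SimpleGraph.fromRel (fun x y =>
    (∃ a b : A, x = Sum.inl a ∧ y = Sum.inl b ∧ K.Adj a b) ∨
    (∃ a b : B, x = Sum.inr a ∧ y = Sum.inr b ∧ H.Adj a b) ∨
    (x = Sum.inl u ∧ y = Sum.inr v))

namespace Set

theorem ncard_preimage_inl_add_ncard_preimage_inr {α β : Type*} [Finite α] [Finite β]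
    (s : Set (α ⊕ β)) : (Sum.inl ⁻¹' s).ncard + (Sum.inr ⁻¹' s).ncard = s.ncard := by
  conv_rhs => rw [← image_preimage_inl_union_image_preimage_inr s]
  rw [ncard_union_eq (isCompl_range_inl_range_inr.disjoint.mono
      (image_subset_range _ _) (image_subset_range _ _)),
    ncard_image_of_injective _ Sum.inl_injective, ncard_image_of_injective _ Sum.inr_injective]

theorem ncard_preimage_of_injective {α β : Type*} {f : α → β} (hf : f.Injective) (s : Set β) :
    (f ⁻¹' s).ncard = (s ∩ range f).ncard := by
  rw [← preimage_inter_range, ncard_preimage_of_injective_subset_range hf inter_subset_right]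

end Set

namespace SimpleGraph

theorem Subgraph.edgeSet_comap {V W : Type*} {G : SimpleGraph V} {G' : SimpleGraph W}
    (f : G ↪g G') (S : G'.Subgraph) : (S.comap f.toHom).edgeSet = Sym2.map f ⁻¹' S.edgeSet := by
  ext e
  induction e using Sym2.ind with
  | _ a b => simpa using fun h => f.map_adj_iff.1 (S.adj_sub h)

end SimpleGraph

section Sparse

variable {ℓ : ℕ} {V : Type*} {G : SimpleGraph V}

theorem Sparse.ncard_edgeSet_le (hG : Sparse ℓ G) (S : G.Subgraph) :
    S.edgeSet.ncard ≤ 2 * S.verts.ncard := by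
  rcases S.edgeSet.eq_empty_or_nonempty with h | h
  · simp [h]
  · have := hG S h
    omega

theorem Sparse.ncard_edgeSet_add_le_of_mem_verts [Finite V] (hG : Sparse ℓ G) (hℓ : ℓ ≤ 2)
    (S : G.Subgraph) {x : V} (hx : x ∈ S.verts) : S.edgeSet.ncard + ℓ ≤ 2 * S.verts.ncard := by
  rcases S.edgeSet.eq_empty_or_nonempty with h | h
  · have : 0 < S.verts.ncard := (Set.ncard_pos).2 ⟨x, hx⟩
    simp only [h, Set.ncard_empty]
    omega
  · exact hG S h

end Sparse

namespace Sym2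

variable {α β : Type*}

theorem disjoint_range_map_inl_range_map_inr :
    Disjoint (Set.range (map (Sum.inl : α → α ⊕ β))) (Set.range (map Sum.inr)) := by
  rw [Set.disjoint_left]
  rintro _ ⟨e, rfl⟩ ⟨e', he⟩
  induction e using Sym2.ind
  induction e' using Sym2.ind
  simp at he

theorem mk_inl_inr_notMem_range_map_inl (a : α) (b : β) :
    s(.inl a, .inr b) ∉ Set.range (map (Sum.inl : α → α ⊕ β)) := by
  rintro ⟨e, he⟩
  induction e using Sym2.ind
  simp at he

theorem mk_inl_inr_notMem_range_map_inr (a : α) (b : β) :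
    s(.inl a, .inr b) ∉ Set.range (map (Sum.inr : β → α ⊕ β)) := by
  rintro ⟨e, he⟩
  induction e using Sym2.ind
  simp at he

end Sym2

namespace edgeJoin

variable {A B : Type*} {K : SimpleGraph A} {H : SimpleGraph B} {u : A} {v : B}

@[simp]
theorem adj_inl_inl {a b : A} : (edgeJoin K H u v).Adj (.inl a) (.inl b) ↔ K.Adj a b := by
  simpa [edgeJoin, K.adj_comm b a] using K.ne_of_adj

@[simp]
theorem adj_inr_inr {a b : B} : (edgeJoin K H u v).Adj (.inr a) (.inr b) ↔ H.Adj a b := by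
  simpa [edgeJoin, H.adj_comm b a] using H.ne_of_adj

@[simp]
theorem adj_inl_inr {a : A} {b : B} :
    (edgeJoin K H u v).Adj (.inl a) (.inr b) ↔ a = u ∧ b = v := by
  simp [edgeJoin]

@[simp]
theorem adj_inr_inl {a : A} {b : B} :
    (edgeJoin K H u v).Adj (.inr b) (.inl a) ↔ a = u ∧ b = v := by
  simp [edgeJoin]

def embeddingInl : K ↪g edgeJoin K H u v where
  toEmbedding := .inl
  map_rel_iff' := adj_inl_inl

def embeddingInr : H ↪g edgeJoin K H u v where
  toEmbedding := .inr
  map_rel_iff' := adj_inr_inr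

@[simp]
theorem coe_embeddingInl : ⇑(embeddingInl : K ↪g edgeJoin K H u v) = Sum.inl := rfl

@[simp]
theorem coe_embeddingInr : ⇑(embeddingInr : H ↪g edgeJoin K H u v) = Sum.inr := rfl

theorem edgeSet_subset :
    (edgeJoin K H u v).edgeSet ⊆
      Set.range (Sym2.map Sum.inl) ∪ Set.range (Sym2.map Sum.inr) ∪ {s(.inl u, .inr v)} := by
  intro e he
  induction e using Sym2.ind with
  | _ x y =>
    rcases x with a | b <;> rcases y with a' | b'
    · exact .inl (.inl ⟨s(a, a'), rfl⟩)
    · obtain ⟨rfl, rfl⟩ := adj_inl_inr.1 he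
      exact .inr rfl
    · obtain ⟨rfl, rfl⟩ := adj_inr_inl.1 he
      exact .inr Sym2.eq_swap
    · exact .inl (.inr ⟨s(b, b'), rfl⟩)

theorem ncard_edgeSet_subgraph [Finite A] [Finite B] (S : (edgeJoin K H u v).Subgraph) :
    S.edgeSet.ncard = (S.comap embeddingInl.toHom).edgeSet.ncard +
      (S.comap embeddingInr.toHom).edgeSet.ncard + (S.edgeSet ∩ {s(.inl u, .inr v)}).ncard := by
  have hS : S.edgeSet = S.edgeSet ∩ Set.range (Sym2.map Sum.inl) ∪
      S.edgeSet ∩ Set.range (Sym2.map Sum.inr) ∪ S.edgeSet ∩ {s(.inl u, .inr v)} := by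
    rw [← Set.inter_union_distrib_left, ← Set.inter_union_distrib_left,
      Set.inter_eq_left.2 (S.edgeSet_subset.trans edgeSet_subset)]
  have hbridge : Disjoint (Set.range (Sym2.map Sum.inl) ∪ Set.range (Sym2.map Sum.inr))
      ({s(.inl u, .inr v)} : Set (Sym2 (A ⊕ B))) :=
    Set.disjoint_singleton_right.2 fun h => h.elim (Sym2.mk_inl_inr_notMem_range_map_inl u v)
      (Sym2.mk_inl_inr_notMem_range_map_inr u v)
  have hdisj : Disjoint (S.edgeSet ∩ Set.range (Sym2.map Sum.inl) ∪
      S.edgeSet ∩ Set.range (Sym2.map Sum.inr)) (S.edgeSet ∩ {s(.inl u, .inr v)}) := by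
    rw [← Set.inter_union_distrib_left]
    exact hbridge.mono Set.inter_subset_right Set.inter_subset_right
  rw [Subgraph.edgeSet_comap, Subgraph.edgeSet_comap, coe_embeddingInl, coe_embeddingInr,
    Set.ncard_preimage_of_injective (Sym2.map.injective Sum.inl_injective),
    Set.ncard_preimage_of_injective (Sym2.map.injective Sum.inr_injective)]
  conv_lhs => rw [hS]
  rw [Set.ncard_union_eq hdisj, Set.ncard_union_eq (Sym2.disjoint_range_map_inl_range_map_inr.mono
      Set.inter_subset_right Set.inter_subset_right)]

theorem ncard_verts_subgraph [Finite A] [Finite B] (S : (edgeJoin K H u v).Subgraph) :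
    S.verts.ncard = (S.comap embeddingInl.toHom).verts.ncard +
      (S.comap embeddingInr.toHom).verts.ncard :=
  (Set.ncard_preimage_inl_add_ncard_preimage_inr S.verts).symm

end edgeJoin

section

variable {A B : Type*} [Finite A] [Finite B] {K : SimpleGraph A} {H : SimpleGraph B} {u : A}
  {v : B}

theorem Sparse.edgeJoin {ℓ : ℕ} (hK : Sparse ℓ K) (hH : Sparse ℓ H) (hℓ₁ : 1 ≤ ℓ) (hℓ₂ : ℓ ≤ 2) :
    Sparse ℓ (edgeJoin K H u v) := by
  intro S hS
  have hE := edgeJoin.ncard_edgeSet_subgraph S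
  have hV := edgeJoin.ncard_verts_subgraph S
  set L := S.comap edgeJoin.embeddingInl.toHom
  set R := S.comap edgeJoin.embeddingInr.toHom
  by_cases hb : s(.inl u, .inr v) ∈ S.edgeSet
  · have hadj : S.Adj (.inl u) (.inr v) := hb
    have hL := hK.ncard_edgeSet_add_le_of_mem_verts hℓ₂ L (S.edge_vert hadj)
    have hR := hH.ncard_edgeSet_add_le_of_mem_verts hℓ₂ R (S.edge_vert hadj.symm)
    rw [Set.inter_singleton_of_mem hb, Set.ncard_singleton] at hE
    omega
  · rw [Set.inter_singleton_of_notMem hb, Set.ncard_empty] at hE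
    have hpos : 0 < S.edgeSet.ncard := (Set.ncard_pos).2 hS
    have hL := hK.ncard_edgeSet_le L
    have hR := hH.ncard_edgeSet_le R
    rcases Nat.eq_zero_or_pos L.edgeSet.ncard with hL0 | hL0
    · have := hH R (Set.nonempty_of_ncard_ne_zero (by omega))
      omega
    · have := hK L (Set.nonempty_of_ncard_ne_zero hL0.ne')
      omega

theorem ncard_edgeSet_edgeJoin :
    (edgeJoin K H u v).edgeSet.ncard = K.edgeSet.ncard + H.edgeSet.ncard + 1 := by
  have h := edgeJoin.ncard_edgeSet_subgraph (⊤ : (edgeJoin K H u v).Subgraph)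
  have hb : s(.inl u, .inr v) ∈ (edgeJoin K H u v).edgeSet := by simp
  simpa [Set.inter_singleton_of_mem hb] using h

theorem Tight.edgeJoin (hK : Tight 1 K) (hH : Tight 1 H) : Tight 1 (edgeJoin K H u v) := by
  refine ⟨hK.1.edgeJoin hH.1 le_rfl one_le_two, ?_⟩
  rw [ncard_edgeSet_edgeJoin, Nat.card_sum]
  have := hK.2
  have := hH.2
  omega

end

theorem stmt8 {A B : Type*} [Finite A] [Finite B]
    (K : SimpleGraph A) (H : SimpleGraph B) (u : A) (v : B)
    (hK : Tight 1 K) (hH : Tight 1 H) :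
    Tight 1 (edgeJoin K H u v) :=
  hK.edgeJoin hH
end

section
/- Let G be a (2,1)-tight simple graph and let Y₁, Y₂ be two distinct subgraphs of G, each isomorphic to K₄ ⊔ K₄ or to K₅ minus an edge. Then Y₁ and Y₂ are vertex disjoint. -/
open SimpleGraph

/-- The complete graph on 5 vertices minus one edge. -/
def K5e : SimpleGraph (Fin 5) :=
  (⊤ : SimpleGraph (Fin 5)).deleteEdges {s(0, 1)}

/-- Two copies of `K₄` sharing exactly one edge and its endpoints. -/
def K44 : SimpleGraph (Fin 6) :=
  SimpleGraph.fromRel (fun a b =>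
    (({a, b} : Set (Fin 6)) ⊆ {0, 1, 2, 3}) ∨ (({a, b} : Set (Fin 6)) ⊆ {2, 3, 4, 5}))

namespace Stmt9Aux

lemma K5e_adj (a b : Fin 5) : K5e.Adj a b ↔ a ≠ b ∧ ¬(s(a,b) = s(0,1)) := by
  simp [K5e, deleteEdges_adj]

lemma pair_subset_iff {α : Type*} (a b : α) (s : Set α) :
    ({a, b} : Set α) ⊆ s ↔ a ∈ s ∧ b ∈ s := by
  simp [Set.insert_subset_iff]

lemma K44_adj (a b : Fin 6) : K44.Adj a b ↔ a ≠ b ∧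
    (((a = 0 ∨ a = 1 ∨ a = 2 ∨ a = 3) ∧ (b = 0 ∨ b = 1 ∨ b = 2 ∨ b = 3)) ∨
     ((a = 2 ∨ a = 3 ∨ a = 4 ∨ a = 5) ∧ (b = 2 ∨ b = 3 ∨ b = 4 ∨ b = 5))) := by
  show a ≠ b ∧ _ ↔ _
  rw [and_congr_right_iff]
  intro hab
  constructor
  · rintro (h | h) <;>
    · rcases h with h | h <;> rw [pair_subset_iff] at h <;>
        simp only [Set.mem_insert_iff, Set.mem_singleton_iff] at h <;> tauto
  · rintro (h | h)
    · left; left; rw [pair_subset_iff]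
      simp only [Set.mem_insert_iff, Set.mem_singleton_iff]; tauto
    · left; right; rw [pair_subset_iff]
      simp only [Set.mem_insert_iff, Set.mem_singleton_iff]; tauto

instance : DecidableRel K5e.Adj := fun a b => decidable_of_iff _ (K5e_adj a b).symm
instance : DecidableRel K44.Adj := fun a b => decidable_of_iff _ (K44_adj a b).symm

/-- Every proper vertex subset spans at most `2|W| - 2` edges (or none). -/
def KeyProp2 {n : ℕ} (K : SimpleGraph (Fin n)) [DecidableRel K.Adj] : Prop :=
  ∀ W : Finset (Fin n), W ≠ Finset.univ →
    (K.edgeFinset.filter fun e => ∀ v ∈ e, v ∈ W).card + 2 ≤ 2 * W.card ∨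
    (K.edgeFinset.filter fun e => ∀ v ∈ e, v ∈ W).card = 0

set_option maxHeartbeats 4000000 in
set_option maxRecDepth 100000 in
lemma keyProp2_K5e : KeyProp2 K5e := by unfold KeyProp2; decide

set_option maxHeartbeats 4000000 in
set_option maxRecDepth 100000 in
lemma keyProp2_K44 : KeyProp2 K44 := by unfold KeyProp2; decide

lemma card_K5e : K5e.edgeFinset.card + 1 = 2 * 5 := by decide
lemma card_K44 : K44.edgeFinset.card + 1 = 2 * 6 := by decide

lemma noiso_K5e : ∀ v : Fin 5, ∃ w, K5e.Adj v w := by decide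
lemma noiso_K44 : ∀ v : Fin 6, ∃ w, K44.Adj v w := by decide

/-- The per-edge-subset form of the key combinatorial fact. -/
lemma key {n : ℕ} (K : SimpleGraph (Fin n)) [DecidableRel K.Adj]
    (h2 : KeyProp2 K) (hc : K.edgeFinset.card + 1 = 2 * n)
    (F : Finset (Sym2 (Fin n))) (hsub : F ⊆ K.edgeFinset) (hne : F.Nonempty) :
    F = K.edgeFinset ∨
      F.card + 2 ≤ 2 * (Finset.univ.filter fun v => ∃ e ∈ F, v ∈ e).card := by
  set S := Finset.univ.filter fun v => ∃ e ∈ F, v ∈ e with hS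
  have hFS : F ⊆ K.edgeFinset.filter fun e => ∀ v ∈ e, v ∈ S := by
    intro e he
    exact Finset.mem_filter.mpr ⟨hsub he,
      fun v hv => Finset.mem_filter.mpr ⟨Finset.mem_univ _, e, he, hv⟩⟩
  by_cases hSu : S = Finset.univ
  · by_cases hF : F = K.edgeFinset
    · exact Or.inl hF
    · right
      have h1 : F.card < K.edgeFinset.card :=
        Finset.card_lt_card (lt_of_le_of_ne hsub hF)
      have h2 : S.card = n := by rw [hSu, Finset.card_univ, Fintype.card_fin]
      omega
  · right
    rcases h2 S hSu with h | h
    · have := Finset.card_le_card hFS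
      omega
    · exfalso
      have := Finset.card_le_card hFS
      have := Finset.card_pos.mpr hne
      omega

lemma edgeSet_map {V W : Type*} {G : SimpleGraph V} {G' : SimpleGraph W}
    (f : G →g G') (H : G.Subgraph) :
    (H.map f).edgeSet = Sym2.map f '' H.edgeSet := by
  ext e
  induction e with
  | _ a b =>
    simp only [Subgraph.mem_edgeSet, Subgraph.map_adj, Relation.Map, Set.mem_image]
    constructor
    · rintro ⟨u, v, h, rfl, rfl⟩
      exact ⟨s(u, v), h, rfl⟩
    · rintro ⟨e', he', hmap⟩
      induction e' with
      | _ u v =>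
        rw [Sym2.map_pair_eq, Sym2.eq_iff] at hmap
        rw [Subgraph.mem_edgeSet] at he'
        rcases hmap with ⟨rfl, rfl⟩ | ⟨rfl, rfl⟩
        · exact ⟨u, v, he', rfl, rfl⟩
        · exact ⟨v, u, he'.symm, rfl, rfl⟩

lemma iso_image_edgeSet {V W : Type*} {A : SimpleGraph V} {B : SimpleGraph W}
    (φ : A ≃g B) : Sym2.map φ '' A.edgeSet = B.edgeSet := by
  ext e
  constructor
  · rintro ⟨e', he', rfl⟩
    induction e' with
    | _ a b =>
      rw [Sym2.map_pair_eq, mem_edgeSet]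
      rw [mem_edgeSet] at he'
      exact φ.map_adj_iff.mpr he'
  · intro he
    refine ⟨Sym2.map φ.symm e, ?_, ?_⟩
    · induction e with
      | _ a b =>
        rw [mem_edgeSet] at he
        rw [Sym2.map_pair_eq, mem_edgeSet]
        exact φ.symm.map_adj_iff.mpr he
    · rw [Sym2.map_map]
      have hid : (⇑φ ∘ ⇑φ.symm) = id := by ext x; simp
      rw [hid, Sym2.map_id]
      rfl

lemma subgraph_eq_of_verts_edgeSet {V : Type*} {G : SimpleGraph V} {Z Y : G.Subgraph}
    (hv : Z.verts = Y.verts) (he : Z.edgeSet = Y.edgeSet) : Z = Y := by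
  ext a b
  · rw [hv]
  · rw [← Subgraph.mem_edgeSet, ← Subgraph.mem_edgeSet, he]

/-- Transfer of the key lemma through an isomorphism with `K`. -/
lemma transfer {V : Type*} {G : SimpleGraph V} {Y Z : G.Subgraph} {n : ℕ}
    (K : SimpleGraph (Fin n)) [DecidableRel K.Adj]
    (h2 : KeyProp2 K) (hc : K.edgeFinset.card + 1 = 2 * n)
    (hni : ∀ v : Fin n, ∃ w, K.Adj v w)
    (hiso : Y.coe ≃g K) (hZY : Z ≤ Y) (hZ : Z.edgeSet.Nonempty) :
    Z = Y ∨ Z.edgeSet.ncard + 2 ≤ 2 * Z.verts.ncard := by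
  classical
  set Z' : Y.coe.Subgraph := Y.restrict Z with hZ'def
  have hZc : Subgraph.coeSubgraph Z' = Z := by
    rw [hZ'def, Subgraph.coeSubgraph_restrict_eq]
    exact inf_eq_right.mpr hZY
  set H : K.Subgraph := Z'.map hiso.toHom with hHdef
  -- vertex counts
  have hvZ : Z.verts = Subtype.val '' Z'.verts := by
    rw [← hZc]; rfl
  have hvZ' : Z.verts.ncard = Z'.verts.ncard := by
    rw [hvZ, Set.ncard_image_of_injective _ Subtype.val_injective]
  have hvH : H.verts = ⇑hiso '' Z'.verts := rfl
  have hvH' : H.verts.ncard = Z'.verts.ncard := by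
    rw [hvH, Set.ncard_image_of_injective _ hiso.injective]
  -- edge counts
  have heZ : Z.edgeSet = Sym2.map Subtype.val '' Z'.edgeSet := by
    rw [← hZc]
    exact edgeSet_map Y.hom Z'
  have heZ' : Z.edgeSet.ncard = Z'.edgeSet.ncard := by
    rw [heZ, Set.ncard_image_of_injective _ (Sym2.map.injective Subtype.val_injective)]
  have heH : H.edgeSet = Sym2.map ⇑hiso '' Z'.edgeSet := edgeSet_map hiso.toHom Z'
  have heH' : H.edgeSet.ncard = Z'.edgeSet.ncard := by
    rw [heH, Set.ncard_image_of_injective _ (Sym2.map.injective hiso.injective)]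
  -- the finset of edges of H
  set F : Finset (Sym2 (Fin n)) := (Set.toFinite H.edgeSet).toFinset with hFdef
  have hFcoe : (F : Set (Sym2 (Fin n))) = H.edgeSet := Set.Finite.coe_toFinset _
  have hFcard : F.card = H.edgeSet.ncard :=
    (Set.ncard_eq_toFinset_card _ (Set.toFinite H.edgeSet)).symm
  have hFsub : F ⊆ K.edgeFinset := by
    intro e he
    rw [Set.Finite.mem_toFinset] at he
    exact mem_edgeFinset.mpr (H.edgeSet_subset he)
  have hZ'ne : Z'.edgeSet.Nonempty := by
    rcases hZ with ⟨e, he⟩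
    rw [heZ] at he
    exact (Set.image_nonempty.mp ⟨e, he⟩)
  have hFne : F.Nonempty := by
    rcases hZ'ne with ⟨e, he⟩
    exact ⟨Sym2.map ⇑hiso e, Set.Finite.mem_toFinset _ |>.mpr (heH ▸ ⟨e, he, rfl⟩)⟩
  rcases key K h2 hc F hFsub hFne with hFall | hFineq
  · -- F is all edges : conclude Z = Y
    left
    have hHE : H.edgeSet = K.edgeSet := by
      rw [← hFcoe, hFall, coe_edgeFinset]
    -- H.verts = univ
    have hHV : H.verts = Set.univ := by
      apply Set.eq_univ_of_forall
      intro v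
      obtain ⟨w, hw⟩ := hni v
      exact Subgraph.mem_verts_of_mem_edge (hHE ▸ (mem_edgeSet K).mpr hw :
        s(v, w) ∈ H.edgeSet) (Sym2.mem_mk_left v w)
    -- pull back
    have hZ'V : Z'.verts = Set.univ := by
      apply Set.image_injective.mpr hiso.injective
      rw [← hvH, hHV, Set.image_univ]
      exact (Set.range_eq_univ.mpr hiso.surjective).symm
    have hZ'E : Z'.edgeSet = Y.coe.edgeSet := by
      apply Set.image_injective.mpr (Sym2.map.injective hiso.injective)
      rw [← heH, hHE, iso_image_edgeSet hiso]
    apply subgraph_eq_of_verts_edgeSet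
    · rw [hvZ, hZ'V, Set.image_univ, Subtype.range_coe]
    · rw [heZ, hZ'E, Subgraph.image_coe_edgeSet_coe]
  · -- the inequality case
    right
    set S := Finset.univ.filter fun v => ∃ e ∈ F, v ∈ e with hSdef
    have hSsub : (S : Set (Fin n)) ⊆ H.verts := by
      intro v hv
      rw [Finset.coe_filter] at hv
      obtain ⟨-, e, he, hve⟩ := hv
      exact Subgraph.mem_verts_of_mem_edge (Set.Finite.mem_toFinset _ |>.mp he) hve
    have hScard : S.card ≤ H.verts.ncard := by
      rw [← Set.ncard_coe_finset]
      exact Set.ncard_le_ncard hSsub (Set.toFinite _)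
    rw [heZ', ← heH', ← hFcard]
    rw [hvZ', ← hvH']
    omega

/-- Everything we need about a subgraph isomorphic to `K44` or `K5e`. -/
lemma good {V : Type*} {G : SimpleGraph V} (Y : G.Subgraph)
    (h : Nonempty (Y.coe ≃g K44) ∨ Nonempty (Y.coe ≃g K5e)) :
    (Y.edgeSet.ncard + 1 = 2 * Y.verts.ncard) ∧ Y.edgeSet.Nonempty ∧
      ∀ Z : G.Subgraph, Z ≤ Y → Z.edgeSet.Nonempty →
        Z = Y ∨ Z.edgeSet.ncard + 2 ≤ 2 * Z.verts.ncard := by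
  classical
  have main : ∀ (n : ℕ) (K : SimpleGraph (Fin n)) (_ : DecidableRel K.Adj),
      KeyProp2 K → K.edgeFinset.card + 1 = 2 * n → (∀ v : Fin n, ∃ w, K.Adj v w) →
      (Y.coe ≃g K) →
      (Y.edgeSet.ncard + 1 = 2 * Y.verts.ncard) ∧ Y.edgeSet.Nonempty ∧
        ∀ Z : G.Subgraph, Z ≤ Y → Z.edgeSet.Nonempty →
          Z = Y ∨ Z.edgeSet.ncard + 2 ≤ 2 * Z.verts.ncard := by
    intro n K hdec h2 hc hni hiso
    have hv : Y.verts.ncard = n := by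
      rw [← Nat.card_coe_set_eq, Nat.card_congr hiso.toEquiv, Nat.card_eq_fintype_card,
        Fintype.card_fin]
    have he : Y.edgeSet.ncard = K.edgeFinset.card := by
      have h1 : Y.edgeSet = Sym2.map Subtype.val '' Y.coe.edgeSet :=
        (Subgraph.image_coe_edgeSet_coe Y).symm
      have h3 : Sym2.map ⇑hiso '' Y.coe.edgeSet = K.edgeSet := iso_image_edgeSet hiso
      rw [h1, Set.ncard_image_of_injective _ (Sym2.map.injective Subtype.val_injective),
        ← Set.ncard_image_of_injective _ (Sym2.map.injective hiso.injective), h3,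
        ← coe_edgeFinset, Set.ncard_coe_finset]
    refine ⟨by omega, ?_, ?_⟩
    · apply Set.nonempty_of_ncard_ne_zero
      omega
    · intro Z hZY hZ
      exact transfer K h2 hc hni hiso hZY hZ
  rcases h with h | h
  · exact h.elim fun hiso => main 6 K44 inferInstance keyProp2_K44 card_K44 noiso_K44 hiso
  · exact h.elim fun hiso => main 5 K5e inferInstance keyProp2_K5e card_K5e noiso_K5e hiso

end Stmt9Aux

open Stmt9Aux in
theorem stmt9 {V : Type*} [Finite V] (G : SimpleGraph V) (hG : Tight 1 G)
    (Y₁ Y₂ : G.Subgraph)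
    (h1 : Nonempty (Y₁.coe ≃g K44) ∨ Nonempty (Y₁.coe ≃g K5e))
    (h2 : Nonempty (Y₂.coe ≃g K44) ∨ Nonempty (Y₂.coe ≃g K5e))
    (hne : Y₁ ≠ Y₂) :
    Disjoint Y₁.verts Y₂.verts := by
  obtain ⟨hSp, -⟩ := hG
  obtain ⟨hv1, hne1, htr1⟩ := good Y₁ h1
  obtain ⟨hv2, hne2, htr2⟩ := good Y₂ h2
  by_contra hnd
  have hint : (Y₁.verts ∩ Y₂.verts).Nonempty :=
    Set.not_disjoint_iff_nonempty_inter.mp hnd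
  have hUe : (Y₁ ⊔ Y₂).edgeSet.Nonempty := by
    rw [Subgraph.edgeSet_sup]
    exact hne1.inl
  have hU := hSp (Y₁ ⊔ Y₂) hUe
  rw [Subgraph.edgeSet_sup, Subgraph.verts_sup] at hU
  have hEi := Set.ncard_union_add_ncard_inter Y₁.edgeSet Y₂.edgeSet
    (Set.toFinite _) (Set.toFinite _)
  have hVi := Set.ncard_union_add_ncard_inter Y₁.verts Y₂.verts
    (Set.toFinite _) (Set.toFinite _)
  have hVpos : 0 < (Y₁.verts ∩ Y₂.verts).ncard :=
    (Set.ncard_pos (Set.toFinite _)).mpr hint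
  have hZe : (Y₁ ⊓ Y₂).edgeSet.Nonempty := by
    rw [Subgraph.edgeSet_inf]
    apply Set.nonempty_of_ncard_ne_zero
    omega
  rcases htr1 (Y₁ ⊓ Y₂) inf_le_left hZe with h | h
  · rcases htr2 (Y₁ ⊓ Y₂) inf_le_right hZe with h' | h'
    · exact hne (h ▸ h')
    · rw [Subgraph.edgeSet_inf, Subgraph.verts_inf] at h'
      omega
  · rw [Subgraph.edgeSet_inf, Subgraph.verts_inf] at h
    omega
end

section
/- Let G be a (2,ℓ)-tight simple graph for ℓ ∈ {1,2}, let v be a degree-3 vertex with neighbours v₁, v₂, v₃ such that v₁v₂ ∉ E(G) but v₁v₃, v₂v₃ ∈ E(G). Then there is no (2,ℓ)-tight subgraph Y of G containing v₁ and v₂ but neither v nor v₃; consequently the graph obtained by deleting v and its incident edges and adding the edge v₁v₂ is (2,ℓ)-tight. -/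
open SimpleGraph

/-- A subgraph `Y` of `G` is `(2,ℓ)`-tight. -/
def TightSub (ℓ : ℕ) {V : Type*} {G : SimpleGraph V} (Y : G.Subgraph) : Prop :=
  Y.edgeSet.ncard + ℓ = 2 * Y.verts.ncard ∧
  ∀ Z : G.Subgraph, Z ≤ Y → Z.edgeSet.Nonempty → Z.edgeSet.ncard + ℓ ≤ 2 * Z.verts.ncard

/-!
Let `T` be the `K₄ − v₁v₂` on `{v, v₁, v₂, v₃}`. If a subgraph `H` of `G` contains `v₁, v₂` but
not `v`, then `H ∪ T` has one or two more vertices (`v`, and `v₃` if it was missing) but at least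
three or five more edges, so `f(H ∪ T) < f(H)` and sparsity of `G` forces `f(H) > ℓ`. This rules
out a tight `Y`. It also makes `G - v + v₁v₂` sparse: a subgraph using the new edge has `f` one
less than its trace in `G`, which contains `v₁, v₂` and avoids `v`. For the count, deleting `v`
removes one vertex and three edges, and `v₁v₂` gives one edge back.
-/

namespace SimpleGraph

variable {V W : Type*}

theorem ncard_edgeSet_induce_compl_singleton_add [Finite V] (G : SimpleGraph V) (x : V) :
    (G.induce {x}ᶜ).edgeSet.ncard + (G.neighborSet x).ncard = G.edgeSet.ncard := by
  classical
  have := Fintype.ofFinite V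
  have hI : (G.incidenceSet x).ncard = (G.neighborSet x).ncard :=
    Nat.card_congr (G.incidenceSetEquivNeighborSet x)
  have hD : (G.induce {x}ᶜ).edgeSet.ncard = (G.deleteIncidenceSet x).edgeSet.ncard := by
    simpa only [edgeFinset, Set.ncard_eq_toFinset_card'] using
      G.card_edgeFinset_induce_compl_singleton x
  rw [hD, edgeSet_deleteIncidenceSet, ← hI,
    Set.ncard_sdiff_add_ncard_of_subset (G.incidenceSet_subset x)]

theorem ncard_edgeSet_sup_edge [Finite V] {G : SimpleGraph V} {a b : V} (hab : a ≠ b)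
    (h : ¬ G.Adj a b) : (G ⊔ edge a b).edgeSet.ncard = G.edgeSet.ncard + 1 := by
  rw [edgeSet_sup, edgeSet_edge_of_ne hab, Set.union_singleton,
    Set.ncard_insert_of_notMem (G.mem_edgeSet.not.mpr h)]

namespace Subgraph

theorem ncard_verts_map {G : SimpleGraph V} {G' : SimpleGraph W} {f : G →g G'}
    (hf : Function.Injective f) (H : G.Subgraph) : (H.map f).verts.ncard = H.verts.ncard :=
  Set.ncard_image_of_injective _ hf

theorem ncard_edgeSet_map {G : SimpleGraph V} {G' : SimpleGraph W} {f : G →g G'}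
    (hf : Function.Injective f) (H : G.Subgraph) :
    (H.map f).edgeSet.ncard = H.edgeSet.ncard := by
  rw [edgeSet_map]
  exact Set.ncard_image_of_injective _ (Sym2.map.injective hf)

theorem edgeSet_comap_ofLE_sup_edge {G : SimpleGraph V} {a b : V} (h : ¬ G.Adj a b)
    (H : (G ⊔ edge a b).Subgraph) :
    (H.comap (Hom.ofLE le_sup_left)).edgeSet = H.edgeSet \ {s(a, b)} := by
  ext e
  induction e using Sym2.ind with
  | _ x y =>
    have := @H.adj_sub x y
    have : ¬ G.Adj b a := fun h' => h h'.symm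
    simp only [Subgraph.mem_edgeSet, comap_adj, Hom.coe_ofLE, id, Set.mem_sdiff,
      Set.mem_singleton_iff, Sym2.eq_iff] at this ⊢
    grind

end Subgraph

end SimpleGraph

section

variable {V : Type*} [Finite V] {ℓ : ℕ} {G : SimpleGraph V} {v v₁ v₂ v₃ : V}

theorem Sparse.ncard_edgeSet_add_lt (hG : Sparse ℓ G) (h1 : G.Adj v v₁) (h2 : G.Adj v v₂)
    (h3 : G.Adj v v₃) (h13 : G.Adj v₁ v₃) (h23 : G.Adj v₂ v₃) (h12 : v₁ ≠ v₂)
    {H : G.Subgraph} (hv₁ : v₁ ∈ H.verts) (hv₂ : v₂ ∈ H.verts) (hv : v ∉ H.verts) :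
    H.edgeSet.ncard + ℓ < 2 * H.verts.ncard := by
  set K := H ⊔ (⊤ : G.Subgraph).induce {v, v₁, v₂, v₃}
  have hK : K.edgeSet.ncard + ℓ ≤ 2 * K.verts.ncard := hG K ⟨s(v, v₁), by simp [K, h1]⟩
  have := h1.ne; have := h2.ne; have := h3.ne; have := h13.ne; have := h23.ne
  have hvH : ∀ w, s(v, w) ∉ H.edgeSet := fun w h => hv (H.edge_vert h)
  by_cases hv₃ : v₃ ∈ H.verts
  · have hV : K.verts = insert v H.verts := by
      ext x
      simp [K]
      grind
    have hE : insert s(v, v₁) (insert s(v, v₂) (insert s(v, v₃) H.edgeSet)) ⊆ K.edgeSet := by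
      simp [K, Set.insert_subset_iff, h1, h2, h3]
    have hE' := Set.ncard_le_ncard hE
    rw [Set.ncard_insert_of_notMem (by simp [*]), Set.ncard_insert_of_notMem (by simp [*]),
      Set.ncard_insert_of_notMem (hvH _)] at hE'
    rw [hV, Set.ncard_insert_of_notMem hv] at hK
    omega
  · have hv₃H : ∀ w, s(w, v₃) ∉ H.edgeSet := fun w h => hv₃ (H.edge_vert h.symm)
    have hV : K.verts = insert v (insert v₃ H.verts) := by
      ext x
      simp [K]
      grind
    have hE : insert s(v, v₁) (insert s(v, v₂) (insert s(v, v₃) (insert s(v₁, v₃)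
        (insert s(v₂, v₃) H.edgeSet)))) ⊆ K.edgeSet := by
      simp [K, Set.insert_subset_iff, h1, h2, h3, h13, h23]
    have hE' := Set.ncard_le_ncard hE
    rw [Set.ncard_insert_of_notMem (by simp [*]), Set.ncard_insert_of_notMem (by simp [*]),
      Set.ncard_insert_of_notMem (by simp [*]), Set.ncard_insert_of_notMem (by simp [*]),
      Set.ncard_insert_of_notMem (hv₃H _)] at hE'
    rw [hV, Set.ncard_insert_of_notMem (by simp [*]), Set.ncard_insert_of_notMem hv₃] at hK
    omega

theorem Sparse.induce_sup_edge (hG : Sparse ℓ G) (h1 : G.Adj v v₁) (h2 : G.Adj v v₂)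
    (h3 : G.Adj v v₃) (h13 : G.Adj v₁ v₃) (h23 : G.Adj v₂ v₃) (h12 : v₁ ≠ v₂)
    (hn12 : ¬ G.Adj v₁ v₂) : Sparse ℓ ((G ⊔ edge v₁ v₂).induce {v}ᶜ) := by
  intro H hH
  have hinj : Function.Injective (Embedding.induce (G := G ⊔ edge v₁ v₂) {v}ᶜ).toHom :=
    RelEmbedding.injective _
  rw [← Subgraph.ncard_edgeSet_map hinj, ← Subgraph.ncard_verts_map hinj]
  set H₁ := H.map (Embedding.induce (G := G ⊔ edge v₁ v₂) {v}ᶜ).toHom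
  have hv : v ∉ H₁.verts := by simp [H₁]
  set H₂ := H₁.comap (Hom.ofLE le_sup_left)
  have hV : H₂.verts = H₁.verts := rfl
  have hE := Subgraph.edgeSet_comap_ofLE_sup_edge hn12 H₁
  by_cases he : s(v₁, v₂) ∈ H₁.edgeSet
  · have hlt := hG.ncard_edgeSet_add_lt h1 h2 h3 h13 h23 h12 (H := H₂) (H₁.edge_vert he)
      (H₁.edge_vert (H₁.adj_symm he)) hv
    rw [hE, hV, Set.ncard_sdiff_singleton_of_mem he] at hlt
    have : 0 < H₁.edgeSet.ncard := (Set.ncard_pos).mpr ⟨_, he⟩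
    omega
  · rw [Set.sdiff_singleton_eq_self he] at hE
    have hH₁ : H₁.edgeSet.Nonempty := by simpa [H₁] using hH
    have hle := hG H₂ (hE ▸ hH₁)
    rwa [hE, hV] at hle

theorem Tight.induce_sup_edge (hG : Tight ℓ G) (hdeg : (G.neighborSet v).ncard = 3)
    (h1 : G.Adj v v₁) (h2 : G.Adj v v₂) (h3 : G.Adj v v₃) (h13 : G.Adj v₁ v₃)
    (h23 : G.Adj v₂ v₃) (h12 : v₁ ≠ v₂) (hn12 : ¬ G.Adj v₁ v₂) :
    Tight ℓ ((G ⊔ edge v₁ v₂).induce {v}ᶜ) := by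
  refine ⟨hG.1.induce_sup_edge h1 h2 h3 h13 h23 h12 hn12, ?_⟩
  have hN : (G ⊔ edge v₁ v₂).neighborSet v = G.neighborSet v := by
    ext w
    simp [edge_adj, h1.ne, h2.ne]
  have hE := (G ⊔ edge v₁ v₂).ncard_edgeSet_induce_compl_singleton_add v
  rw [hN, hdeg, ncard_edgeSet_sup_edge h12 hn12] at hE
  have hV : Nat.card ({v}ᶜ : Set V) + 1 = Nat.card V := by
    rw [Nat.card_coe_set_eq, ← Set.ncard_singleton v, Set.ncard_compl_add_ncard]
  have := hG.2
  omega

end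

theorem stmt12_general {V : Type*} [Finite V] (G : SimpleGraph V)
    (ℓ : ℕ) (hG : Tight ℓ G)
    (v v₁ v₂ v₃ : V)
    (hnb : G.neighborSet v = {v₁, v₂, v₃})
    (hdeg : (G.neighborSet v).ncard = 3)
    (h12 : ¬ G.Adj v₁ v₂) (h13 : G.Adj v₁ v₃) (h23 : G.Adj v₂ v₃) :
    (¬ ∃ Y : G.Subgraph, TightSub ℓ Y ∧ v₁ ∈ Y.verts ∧ v₂ ∈ Y.verts ∧
        v ∉ Y.verts ∧ v₃ ∉ Y.verts) ∧
    Tight ℓ (SimpleGraph.induce {x : V | x ≠ v}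
      (G ⊔ SimpleGraph.fromEdgeSet {s(v₁, v₂)})) := by
  have hadj : ∀ w ∈ ({v₁, v₂, v₃} : Set V), G.Adj v w := fun w hw => by rwa [← hnb] at hw
  have h1 := hadj v₁ (by simp)
  have h2 := hadj v₂ (by simp)
  have h3 := hadj v₃ (by simp)
  have hne : v₁ ≠ v₂ := by
    rintro rfl
    have := Set.ncard_insert_le v₁ {v₃}
    simp_all
  refine ⟨fun ⟨Y, hY, hv₁, hv₂, hv, _⟩ => ?_, ?_⟩
  · exact (hG.1.ncard_edgeSet_add_lt h1 h2 h3 h13 h23 hne hv₁ hv₂ hv).ne hY.1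
  · rw [← Set.compl_singleton_eq]
    exact hG.induce_sup_edge hdeg h1 h2 h3 h13 h23 hne h12

theorem stmt12 {V : Type*} [Finite V] (G : SimpleGraph V)
    (ℓ : ℕ) (hℓ : ℓ = 1 ∨ ℓ = 2) (hG : Tight ℓ G)
    (v v₁ v₂ v₃ : V)
    (hnb : G.neighborSet v = {v₁, v₂, v₃})
    (hdeg : (G.neighborSet v).ncard = 3)
    (h12 : ¬ G.Adj v₁ v₂) (h13 : G.Adj v₁ v₃) (h23 : G.Adj v₂ v₃) :
    (¬ ∃ Y : G.Subgraph, TightSub ℓ Y ∧ v₁ ∈ Y.verts ∧ v₂ ∈ Y.verts ∧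
        v ∉ Y.verts ∧ v₃ ∉ Y.verts) ∧
    Tight ℓ (SimpleGraph.induce {x : V | x ≠ v}
      (G ⊔ SimpleGraph.fromEdgeSet {s(v₁, v₂)})) :=
  stmt12_general G ℓ hG v v₁ v₂ v₃ hnb hdeg h12 h13 h23
end

section
/- Let M₃ ⊂ … ⊂ Mₙ be a triangle sequence in a simple graph, with S(Mₙ) the set of edges of Mₙ in exactly one triangle of Mₙ. Then for every edge ab ∈ E(Mₙ) \ S(Mₙ), the vertex pair {a,b} separates Mₙ, and moreover if a_l and a_r are the two neighbours of a along the spanning cycle formed by S(Mₙ), then a_l and a_r lie in different components of Mₙ − {a,b}. -/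
open SimpleGraph

/-- The edge `ab` of the subgraph `H` lies in exactly one triangle of `H`
(triangles on edge `ab` correspond to common neighbours of `a` and `b`). -/
def OneTriangle {V : Type*} {G : SimpleGraph V} (H : G.Subgraph) (a b : V) : Prop :=
  {c : V | H.Adj a c ∧ H.Adj b c}.ncard = 1

/-- A triangle sequence `M₃ ⊂ M₄ ⊂ … ⊂ Mₙ` in `G`: `M₃` is a copy of `K₃`, and
`Mᵢ` is obtained from `Mᵢ₋₁` by adding one new vertex `v` joined to the two
endpoints of an edge `ab` of `Mᵢ₋₁` lying in exactly one triangle of `Mᵢ₋₁`. -/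
structure TriangleSeq {V : Type*} (G : SimpleGraph V) (n : ℕ) where
  M : ℕ → G.Subgraph
  three_le : 3 ≤ n
  base : ∃ a b c : V, a ≠ b ∧ a ≠ c ∧ b ≠ c ∧ (M 3).verts = {a, b, c} ∧
    (M 3).edgeSet = {s(a, b), s(a, c), s(b, c)}
  step : ∀ i, 3 < i → i ≤ n → ∃ v a b : V, v ∉ (M (i - 1)).verts ∧
    (M (i - 1)).Adj a b ∧ OneTriangle (M (i - 1)) a b ∧
    (M i).verts = insert v (M (i - 1)).verts ∧
    (M i).edgeSet = (M (i - 1)).edgeSet ∪ {s(v, a), s(v, b)}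

/-- `S(H)`: the set of edges of `H` which lie in exactly one triangle of `H`. -/
def Sset {V : Type*} {G : SimpleGraph V} (H : G.Subgraph) : Set (Sym2 V) :=
  {e | e ∈ H.edgeSet ∧ ∀ a b : V, e = s(a, b) → OneTriangle H a b}

lemma zval_inj {m : ℕ} [NeZero m] {x y : ZMod m} (h : x.val = y.val) : x = y :=
  ZMod.val_injective m h

lemma zsub_val {m : ℕ} [NeZero m] (x y : ZMod m) :
    (x - y).val = if y.val ≤ x.val then x.val - y.val else x.val + m - y.val := by
  have hx := ZMod.val_lt x
  have hy := ZMod.val_lt y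
  rw [sub_eq_add_neg, ZMod.val_add, ZMod.neg_val]
  by_cases h0 : y = 0
  · subst h0
    simp [ZMod.val_zero, Nat.mod_eq_of_lt hx]
  · have hy0 : 0 < y.val := by
      rcases Nat.eq_zero_or_pos y.val with h | h
      · exact absurd (zval_inj (h := by simp [h, ZMod.val_zero])) h0
      · exact h
    rw [if_neg h0]
    by_cases hle : y.val ≤ x.val
    · rw [if_pos hle]
      have : x.val + (m - y.val) = (x.val - y.val) + m := by omega
      rw [this, Nat.add_mod_right, Nat.mod_eq_of_lt (by omega)]
    · rw [if_neg hle, Nat.mod_eq_of_lt (by omega)]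
      omega

lemma zadd1_val {m : ℕ} (hm : 2 ≤ m) (x : ZMod m) :
    (x + 1).val = if x.val + 1 = m then 0 else x.val + 1 := by
  haveI : NeZero m := ⟨by omega⟩
  haveI : Fact (1 < m) := ⟨by omega⟩
  have hx := ZMod.val_lt x
  rw [ZMod.val_add, ZMod.val_one]
  by_cases h : x.val + 1 = m
  · simp [h]
  · rw [if_neg h, Nat.mod_eq_of_lt (by omega)]

/-- The invariant maintained along a triangle sequence: `pos` is a cyclic
labelling of the vertices of `H` by `ZMod m`; consecutive vertices are adjacent;
cycle edges lie in exactly one triangle, chords do not; and every edge lies on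
one (closed) side of every chord. -/
structure CycInv {V : Type*} {G : SimpleGraph V} (H : G.Subgraph) (m : ℕ)
    (pos : V → ZMod m) : Prop where
  hm : 3 ≤ m
  inj : ∀ u ∈ H.verts, ∀ w ∈ H.verts, pos u = pos w → u = w
  surj : ∀ k : ZMod m, ∃ u ∈ H.verts, pos u = k
  cyc_edge : ∀ u ∈ H.verts, ∀ w ∈ H.verts, pos w = pos u + 1 → H.Adj u w
  cyc_one : ∀ u w, H.Adj u w → pos w = pos u + 1 →
    {c | H.Adj u c ∧ H.Adj w c}.ncard = 1
  chord_ne_one : ∀ u w, H.Adj u w → pos w ≠ pos u + 1 → pos u ≠ pos w + 1 →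
    {c | H.Adj u c ∧ H.Adj w c}.ncard ≠ 1
  chord_side : ∀ u w, H.Adj u w → pos w ≠ pos u + 1 → pos u ≠ pos w + 1 →
    ∀ x y, H.Adj x y →
      ((pos x - pos u).val ≤ (pos w - pos u).val ∧
        (pos y - pos u).val ≤ (pos w - pos u).val) ∨
      ((pos x - pos w).val ≤ (pos u - pos w).val ∧
        (pos y - pos w).val ≤ (pos u - pos w).val)

lemma base_inv {V : Type*} {G : SimpleGraph V} {H : G.Subgraph} {a b c : V}
    (hab : a ≠ b) (hac : a ≠ c) (hbc : b ≠ c)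
    (hV : H.verts = {a, b, c})
    (hE : H.edgeSet = {s(a, b), s(a, c), s(b, c)}) :
    ∃ pos : V → ZMod 3, CycInv H 3 pos := by
  classical
  set pos : V → ZMod 3 := fun u => if u = a then 0 else if u = b then 1 else 2 with hpos
  have pa : pos a = 0 := by simp [hpos]
  have pb : pos b = 1 := by simp [hpos, Ne.symm hab]
  have pc : pos c = 2 := by simp [hpos, Ne.symm hac, Ne.symm hbc]
  have adj : ∀ x y, H.Adj x y ↔
      (x = a ∧ y = b) ∨ (x = b ∧ y = a) ∨ (x = a ∧ y = c) ∨ (x = c ∧ y = a) ∨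
      (x = b ∧ y = c) ∨ (x = c ∧ y = b) := by
    intro x y
    rw [← Subgraph.mem_edgeSet, hE]
    simp only [Set.mem_insert_iff, Set.mem_singleton_iff, Sym2.eq_iff]
    tauto
  have hmem : ∀ u, u ∈ H.verts ↔ u = a ∨ u = b ∨ u = c := by
    intro u; rw [hV]; simp
  -- neighbourhoods
  have Na : ∀ x, H.Adj a x ↔ x = b ∨ x = c := by
    intro x; rw [adj]; constructor
    · rintro (⟨-,h⟩|⟨h,-⟩|⟨-,h⟩|⟨h,-⟩|⟨h,-⟩|⟨h,-⟩) <;> first | exact Or.inl h | exact Or.inr h |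
        (exact absurd h (by tauto))
    · rintro (rfl|rfl) <;> tauto
  have Nb : ∀ x, H.Adj b x ↔ x = a ∨ x = c := by
    intro x; rw [adj]; constructor
    · rintro (⟨h,-⟩|⟨-,h⟩|⟨h,-⟩|⟨h,-⟩|⟨-,h⟩|⟨h,-⟩) <;> first | exact Or.inl h | exact Or.inr h |
        (exact absurd h (by tauto))
    · rintro (rfl|rfl) <;> tauto
  have Nc : ∀ x, H.Adj c x ↔ x = a ∨ x = b := by
    intro x; rw [adj]; constructor
    · rintro (⟨h,-⟩|⟨h,-⟩|⟨h,-⟩|⟨-,h⟩|⟨h,-⟩|⟨-,h⟩) <;> first | exact Or.inl h | exact Or.inr h |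
        (exact absurd h (by tauto))
    · rintro (rfl|rfl) <;> tauto
  refine ⟨pos, ?_, ?_, ?_, ?_, ?_, ?_, ?_⟩
  · norm_num
  · intro u hu w hw h
    rw [hmem] at hu hw
    rcases hu with rfl|rfl|rfl <;> rcases hw with rfl|rfl|rfl <;>
      simp only [pa, pb, pc] at h <;> first | rfl | exact absurd h (by decide)
  · intro k
    have h3 : ∀ j : ZMod 3, j = 0 ∨ j = 1 ∨ j = 2 := by decide
    have := h3 k
    rcases this with rfl|rfl|rfl
    · exact ⟨a, by rw [hmem]; tauto, pa⟩
    · exact ⟨b, by rw [hmem]; tauto, pb⟩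
    · exact ⟨c, by rw [hmem]; tauto, pc⟩
  · intro u hu w hw h
    rw [hmem] at hu hw
    rcases hu with rfl|rfl|rfl <;> rcases hw with rfl|rfl|rfl <;>
      simp only [pa, pb, pc] at h <;> first
        | (exact absurd h (by decide))
        | (rw [adj]; tauto)
  · intro u w hadj h
    rw [adj] at hadj
    rcases hadj with ⟨rfl,rfl⟩|⟨rfl,rfl⟩|⟨rfl,rfl⟩|⟨rfl,rfl⟩|⟨rfl,rfl⟩|⟨rfl,rfl⟩ <;>
      simp only [pa, pb, pc] at h
    · have hs : {x | H.Adj u x ∧ H.Adj w x} = {c} := by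
        ext x
        simp only [Set.mem_setOf_eq, Na, Nb, Set.mem_singleton_iff]
        constructor
        · rintro ⟨h1, h2⟩
          rcases h1 with rfl | rfl <;> rcases h2 with h | h <;>
            first | rfl | (exact absurd h (by tauto))
        · rintro rfl; simp
      rw [hs]; exact Set.ncard_singleton _
    · exact absurd h (by decide)
    · exact absurd h (by decide)
    · have hs : {x | H.Adj u x ∧ H.Adj w x} = {b} := by
        ext x
        simp only [Set.mem_setOf_eq, Nc, Na, Set.mem_singleton_iff]
        constructor
        · rintro ⟨h1, h2⟩
          rcases h1 with rfl | rfl <;> rcases h2 with h | h <;>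
            first | rfl | (exact absurd h (by tauto))
        · rintro rfl; simp
      rw [hs]; exact Set.ncard_singleton _
    · have hs : {x | H.Adj u x ∧ H.Adj w x} = {a} := by
        ext x
        simp only [Set.mem_setOf_eq, Nb, Nc, Set.mem_singleton_iff]
        constructor
        · rintro ⟨h1, h2⟩
          rcases h1 with rfl | rfl <;> rcases h2 with h | h <;>
            first | rfl | (exact absurd h (by tauto))
        · rintro rfl; simp
      rw [hs]; exact Set.ncard_singleton _
    · exact absurd h (by decide)
  · intro u w hadj h1 h2
    rw [adj] at hadj
    rcases hadj with ⟨rfl,rfl⟩|⟨rfl,rfl⟩|⟨rfl,rfl⟩|⟨rfl,rfl⟩|⟨rfl,rfl⟩|⟨rfl,rfl⟩ <;>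
      simp only [pa, pb, pc] at h1 h2 <;> first
        | (exact absurd rfl h1) | (exact absurd rfl h2)
        | (exact absurd (by decide) h1) | (exact absurd (by decide) h2)
  · intro u w hadj h1 h2
    rw [adj] at hadj
    rcases hadj with ⟨rfl,rfl⟩|⟨rfl,rfl⟩|⟨rfl,rfl⟩|⟨rfl,rfl⟩|⟨rfl,rfl⟩|⟨rfl,rfl⟩ <;>
      simp only [pa, pb, pc] at h1 h2 <;> first
        | (exact absurd rfl h1) | (exact absurd rfl h2)
        | (exact absurd (by decide) h1) | (exact absurd (by decide) h2)

set_option maxHeartbeats 1000000 in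
lemma step_inv {V : Type*} [Finite V] {G : SimpleGraph V} {H H' : G.Subgraph} {m : ℕ}
    {pos : V → ZMod m} {v A B : V}
    (inv : CycInv H m pos) (hv : v ∉ H.verts) (hAB : H.Adj A B)
    (horder : pos B = pos A + 1)
    (hverts : H'.verts = insert v H.verts)
    (hedges : H'.edgeSet = H.edgeSet ∪ {s(v, A), s(v, B)}) :
    ∃ pos' : V → ZMod (m + 1), CycInv H' (m + 1) pos' := by
  classical
  obtain hm := inv.hm
  haveI : NeZero m := ⟨by omega⟩
  haveI : NeZero (m + 1) := ⟨by omega⟩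
  have hA : A ∈ H.verts := H.edge_vert hAB
  have hB : B ∈ H.verts := H.edge_vert hAB.symm
  have hvA : v ≠ A := fun h => hv (h ▸ hA)
  have hvB : v ≠ B := fun h => hv (h ▸ hB)
  have adj' : ∀ x y, H'.Adj x y ↔ H.Adj x y ∨ (x = v ∧ y = A) ∨ (x = A ∧ y = v) ∨
      (x = v ∧ y = B) ∨ (x = B ∧ y = v) := by
    intro x y
    rw [← Subgraph.mem_edgeSet, hedges]
    simp only [Set.mem_union, Set.mem_insert_iff, Set.mem_singleton_iff,
      Subgraph.mem_edgeSet, Sym2.eq_iff]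
    tauto
  have noadjv : ∀ x, ¬ H.Adj v x := fun x h => hv (H.edge_vert h)
  have noadjv' : ∀ x, ¬ H.Adj x v := fun x h => hv (H.edge_vert h.symm)
  haveI : Fact (1 < m) := ⟨by omega⟩
  have hone : (1 : ZMod m).val = 1 := ZMod.val_one m
  have negone : ((-1 : ZMod m)).val = m - 1 := by
    rw [ZMod.neg_val, if_neg one_ne_zero, hone]
  set pos' : V → ZMod (m+1) :=
    fun u => if u = v then (m : ZMod (m+1)) else (((pos u - pos B).val : ℕ) : ZMod (m+1))
    with hpos'
  have hold : ∀ u, u ∈ H.verts → u ≠ v := fun u hu h => hv (h ▸ hu)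
  have posv : (pos' v).val = m := by
    simp only [hpos', if_pos rfl]
    rw [ZMod.val_natCast, Nat.mod_eq_of_lt (by omega)]
  have hval : ∀ u, u ≠ v → (pos' u).val = (pos u - pos B).val := by
    intro u hu
    simp only [hpos', if_neg hu]
    rw [ZMod.val_natCast, Nat.mod_eq_of_lt (by have := ZMod.val_lt (pos u - pos B); omega)]
  have hvlt : ∀ u, u ≠ v → (pos' u).val < m := by
    intro u hu; rw [hval u hu]; exact ZMod.val_lt _
  have posB : (pos' B).val = 0 := by
    rw [hval B (Ne.symm hvB), sub_self, ZMod.val_zero]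
  have hABdiff : pos A - pos B = -1 := by rw [horder]; ring
  have posA : (pos' A).val = m - 1 := by
    rw [hval A (Ne.symm hvA), hABdiff, negone]
  have irr : ∀ x, ¬ H.Adj x x := fun x h => (H.adj_sub h).ne rfl
  have irr' : ∀ x, ¬ H'.Adj x x := fun x h => (H'.adj_sub h).ne rfl
  have hABne : A ≠ B := (H.adj_sub hAB).ne
  have mem' : ∀ u, u ∈ H'.verts ↔ u = v ∨ u ∈ H.verts := by
    intro u; rw [hverts]; simp
  have posdiff : ∀ u w, u ∈ H.verts → w ∈ H.verts → u ≠ w → pos u ≠ pos w := by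
    intro u w hu hw hne h
    exact hne (inv.inj u hu w hw h)
  have back0 : ∀ w, w ∈ H.verts → (pos' w).val = 0 → w = B := by
    intro w hw h
    rw [hval w (hold w hw)] at h
    have : pos w - pos B = 0 := zval_inj (by rw [h, ZMod.val_zero])
    exact inv.inj w hw B hB (by rwa [sub_eq_zero] at this)
  have backm1 : ∀ u, u ∈ H.verts → (pos' u).val = m - 1 → u = A := by
    intro u hu h
    rw [hval u (hold u hu)] at h
    have : pos u - pos B = pos A - pos B := by
      rw [hABdiff]; exact zval_inj (by rw [h, negone])
    exact inv.inj u hu A hA (sub_left_inj.mp this)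
  have key : ∀ u w, u ∈ H.verts → w ∈ H.verts →
      (pos' w = pos' u + 1 ↔ (pos w = pos u + 1 ∧ u ≠ A)) := by
    intro u w hu hw
    have hu' := hvlt u (hold u hu)
    have hw' := hvlt w (hold w hw)
    constructor
    · intro h
      have hv1 : (pos' w).val = (pos' u).val + 1 := by
        rw [h, zadd1_val (by omega), if_neg (by omega)]
      have huA : u ≠ A := by
        intro hh
        rw [hh, posA] at hv1
        omega
      have hA1 : (pos u - pos B).val ≠ m - 1 := by
        intro hh
        exact huA (backm1 u hu (by rw [hval u (hold u hu)]; exact hh))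
      refine ⟨?_, huA⟩
      have e1 : pos u + 1 - pos B = (pos u - pos B) + 1 := by ring
      have e2 : (pos u + 1 - pos B).val = (pos u - pos B).val + 1 := by
        rw [e1, zadd1_val (by omega), if_neg (by have := ZMod.val_lt (pos u - pos B); omega)]
      have : (pos w - pos B).val = (pos u + 1 - pos B).val := by
        rw [e2, ← hval u (hold u hu), ← hval w (hold w hw)]; exact hv1
      exact sub_left_inj.mp (zval_inj this)
    · rintro ⟨h, huA⟩
      have hA1 : (pos u - pos B).val ≠ m - 1 := by
        intro hh
        exact huA (backm1 u hu (by rw [hval u (hold u hu)]; exact hh))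
      have hu'' := hvlt u (hold u hu)
      have hb := ZMod.val_lt (pos u - pos B)
      apply zval_inj
      rw [zadd1_val (by omega : 2 ≤ m + 1), if_neg (by omega : ¬ (pos' u).val + 1 = m + 1),
        hval w (hold w hw), hval u (hold u hu), h]
      have e1 : pos u + 1 - pos B = (pos u - pos B) + 1 := by ring
      rw [e1, zadd1_val (by omega : 2 ≤ m), if_neg (by omega : ¬ (pos u - pos B).val + 1 = m)]
  have adjv : ∀ c, H'.Adj v c ↔ c = A ∨ c = B := by
    intro c
    rw [adj']
    constructor
    · rintro (h | ⟨-, rfl⟩ | ⟨h, -⟩ | ⟨-, rfl⟩ | ⟨h, -⟩)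
      · exact absurd h (noadjv c)
      · exact Or.inl rfl
      · exact absurd h hvA
      · exact Or.inr rfl
      · exact absurd h hvB
    · rintro (rfl | rfl)
      · exact Or.inr (Or.inl ⟨rfl, rfl⟩)
      · exact Or.inr (Or.inr (Or.inr (Or.inl ⟨rfl, rfl⟩)))
  have adjA : ∀ c, H'.Adj A c ↔ (H.Adj A c ∨ c = v) := by
    intro c
    rw [adj']
    constructor
    · rintro (h | ⟨h, -⟩ | ⟨-, rfl⟩ | ⟨h, -⟩ | ⟨h, -⟩)
      · exact Or.inl h
      · exact absurd h.symm hvA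
      · exact Or.inr rfl
      · exact absurd h.symm hvA
      · exact absurd (h.symm ▸ hAB) (irr A)
    · rintro (h | rfl)
      · exact Or.inl h
      · exact Or.inr (Or.inr (Or.inl ⟨rfl, rfl⟩))
  have adjB : ∀ c, H'.Adj B c ↔ (H.Adj B c ∨ c = v) := by
    intro c
    rw [adj']
    constructor
    · rintro (h | ⟨h, -⟩ | ⟨h, -⟩ | ⟨h, -⟩ | ⟨-, rfl⟩)
      · exact Or.inl h
      · exact absurd h.symm hvB
      · exact absurd (h ▸ hAB) (irr B)
      · exact absurd h.symm hvB
      · exact Or.inr rfl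
    · rintro (h | rfl)
      · exact Or.inl h
      · exact Or.inr (Or.inr (Or.inr (Or.inr ⟨rfl, rfl⟩)))
  have comm_vA : {c | H'.Adj v c ∧ H'.Adj A c} = {B} := by
    ext c
    simp only [Set.mem_setOf_eq, adjv, adjA, Set.mem_singleton_iff]
    constructor
    · rintro ⟨h1, h2⟩
      rcases h1 with h1 | h1
      · exfalso
        rw [h1] at h2
        rcases h2 with h | h
        · exact irr _ h
        · exact hvA h.symm
      · exact h1
    · intro h
      rw [h]
      exact ⟨Or.inr rfl, Or.inl hAB⟩
  have comm_vB : {c | H'.Adj v c ∧ H'.Adj B c} = {A} := by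
    ext c
    simp only [Set.mem_setOf_eq, adjv, adjB, Set.mem_singleton_iff]
    constructor
    · rintro ⟨h1, h2⟩
      rcases h1 with h1 | h1
      · exact h1
      · exfalso
        rw [h1] at h2
        rcases h2 with h | h
        · exact irr _ h
        · exact hvB h.symm
    · intro h
      rw [h]
      exact ⟨Or.inl rfl, Or.inl hAB.symm⟩
  have comm_AB : {c | H'.Adj A c ∧ H'.Adj B c} = insert v {c | H.Adj A c ∧ H.Adj B c} := by
    ext c
    simp only [Set.mem_setOf_eq, adjA, adjB, Set.mem_insert_iff]
    tauto
  have comm_old : ∀ u w, u ∈ H.verts → w ∈ H.verts → u ≠ w → ¬(u = A ∧ w = B) →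
      ¬(u = B ∧ w = A) → {c | H'.Adj u c ∧ H'.Adj w c} = {c | H.Adj u c ∧ H.Adj w c} := by
    intro u w hu hw huw hc1 hc2
    have hu' := hold u hu
    have hw' := hold w hw
    ext c
    simp only [Set.mem_setOf_eq]
    constructor
    · rintro ⟨h1, h2⟩
      by_cases hc : c = v
      · rw [hc] at h1 h2
        exfalso
        have huAB : u = A ∨ u = B := by
          rcases (adj' u v).mp h1 with h | ⟨h, -⟩ | ⟨h, -⟩ | ⟨h, -⟩ | ⟨h, -⟩
          · exact absurd h (noadjv' u)
          · exact absurd h hu'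
          · exact Or.inl h
          · exact absurd h hu'
          · exact Or.inr h
        have hwAB : w = A ∨ w = B := by
          rcases (adj' w v).mp h2 with h | ⟨h, -⟩ | ⟨h, -⟩ | ⟨h, -⟩ | ⟨h, -⟩
          · exact absurd h (noadjv' w)
          · exact absurd h hw'
          · exact Or.inl h
          · exact absurd h hw'
          · exact Or.inr h
        rcases huAB with h3 | h3 <;> rcases hwAB with h4 | h4
        · exact huw (h3.trans h4.symm)
        · exact hc1 ⟨h3, h4⟩
        · exact hc2 ⟨h3, h4⟩
        · exact huw (h3.trans h4.symm)
      · constructor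
        · rcases (adj' u c).mp h1 with h | ⟨h, -⟩ | ⟨-, h⟩ | ⟨h, -⟩ | ⟨-, h⟩
          · exact h
          · exact absurd h hu'
          · exact absurd h hc
          · exact absurd h hu'
          · exact absurd h hc
        · rcases (adj' w c).mp h2 with h | ⟨h, -⟩ | ⟨-, h⟩ | ⟨h, -⟩ | ⟨-, h⟩
          · exact h
          · exact absurd h hw'
          · exact absurd h hc
          · exact absurd h hw'
          · exact absurd h hc
    · rintro ⟨h1, h2⟩
      exact ⟨(adj' u c).mpr (Or.inl h1), (adj' w c).mpr (Or.inl h2)⟩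
  have swap_comm : ∀ u w : V, {c | H'.Adj u c ∧ H'.Adj w c} = {c | H'.Adj w c ∧ H'.Adj u c} := by
    intro u w; ext c; exact and_comm
  have h2ne : (1 + 1 : ZMod m) ≠ 0 := by
    intro h
    have := congrArg ZMod.val h
    rw [zadd1_val (by omega) 1, hone, if_neg (by omega), ZMod.val_zero] at this
    omega
  have notBA : ¬ (pos A = pos B + 1) := by
    intro h
    rw [horder, add_assoc] at h
    exact h2ne (left_eq_add.mp h)
  -- cyc relations involving v
  have cyc_Av : pos' v = pos' A + 1 := by
    apply zval_inj
    rw [posv, zadd1_val (by omega : 2 ≤ m + 1), posA, if_neg (by omega)]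
    omega
  have cyc_vB : pos' B = pos' v + 1 := by
    apply zval_inj
    rw [posB, zadd1_val (by omega : 2 ≤ m + 1), posv, if_pos rfl]
  -- old chords remain chords
  have oldchord : ∀ u w, u ∈ H.verts → w ∈ H.verts → pos' w ≠ pos' u + 1 →
      pos' u ≠ pos' w + 1 → ¬(u = A ∧ w = B) → ¬(u = B ∧ w = A) →
      pos w ≠ pos u + 1 ∧ pos u ≠ pos w + 1 := by
    intro u w hu hw h1 h2 hc1 hc2
    constructor
    · intro h
      by_cases huA : u = A
      · subst huA
        exact hc1 ⟨rfl, inv.inj w hw B hB (by rw [h, ← horder])⟩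
      · exact h1 ((key u w hu hw).mpr ⟨h, huA⟩)
    · intro h
      by_cases hwA : w = A
      · subst hwA
        exact hc2 ⟨inv.inj u hu B hB (by rw [h, ← horder]), rfl⟩
      · exact h2 ((key w u hw hu).mpr ⟨h, hwA⟩)
  have shift_le : ∀ p q r : V, p ≠ v → q ≠ v → r ≠ v →
      (pos p - pos q).val ≤ (pos r - pos q).val →
      (pos' p - pos' q).val ≤ (pos' r - pos' q).val := by
    intro p q r hp hq hr h
    have bp := ZMod.val_lt (pos p - pos B)
    have bq := ZMod.val_lt (pos q - pos B)
    have br := ZMod.val_lt (pos r - pos B)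
    have e1 : pos p - pos q = (pos p - pos B) - (pos q - pos B) := by ring
    have e2 : pos r - pos q = (pos r - pos B) - (pos q - pos B) := by ring
    have E1 : (pos p - pos q).val = if (pos q - pos B).val ≤ (pos p - pos B).val
        then (pos p - pos B).val - (pos q - pos B).val
        else (pos p - pos B).val + m - (pos q - pos B).val := by rw [e1, zsub_val]
    have E2 : (pos r - pos q).val = if (pos q - pos B).val ≤ (pos r - pos B).val
        then (pos r - pos B).val - (pos q - pos B).val
        else (pos r - pos B).val + m - (pos q - pos B).val := by rw [e2, zsub_val]
    have F1 : (pos' p - pos' q).val = if (pos q - pos B).val ≤ (pos p - pos B).val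
        then (pos p - pos B).val - (pos q - pos B).val
        else (pos p - pos B).val + (m + 1) - (pos q - pos B).val := by
      rw [zsub_val, hval p hp, hval q hq]
    have F2 : (pos' r - pos' q).val = if (pos q - pos B).val ≤ (pos r - pos B).val
        then (pos r - pos B).val - (pos q - pos B).val
        else (pos r - pos B).val + (m + 1) - (pos q - pos B).val := by
      rw [zsub_val, hval r hr, hval q hq]
    rw [E1, E2] at h
    rw [F1, F2]
    split_ifs at h ⊢ <;> omega
  refine ⟨pos', ⟨by omega, ?_, ?_, ?_, ?_, ?_, ?_⟩⟩
  -- inj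
  · intro u hu w hw h
    rw [mem'] at hu hw
    rcases hu with huv | hu <;> rcases hw with hwv | hw
    · exact huv.trans hwv.symm
    · exfalso
      rw [huv] at h
      have := congrArg ZMod.val h
      rw [posv] at this
      have := hvlt w (hold w hw)
      omega
    · exfalso
      rw [hwv] at h
      have := congrArg ZMod.val h
      rw [posv] at this
      have := hvlt u (hold u hu)
      omega
    · have := congrArg ZMod.val h
      rw [hval u (hold u hu), hval w (hold w hw)] at this
      exact inv.inj u hu w hw (sub_left_inj.mp (zval_inj this))
  -- surj
  · intro k
    have hk := ZMod.val_lt k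
    by_cases hkm : k.val = m
    · refine ⟨v, (mem' v).mpr (Or.inl rfl), ?_⟩
      apply zval_inj
      rw [posv, hkm]
    · obtain ⟨u, hu, hpu⟩ := inv.surj (pos B + (k.val : ZMod m))
      refine ⟨u, (mem' u).mpr (Or.inr hu), ?_⟩
      apply zval_inj
      rw [hval u (hold u hu), hpu]
      have e : pos B + (k.val : ZMod m) - pos B = (k.val : ZMod m) := by ring
      rw [e, ZMod.val_natCast, Nat.mod_eq_of_lt (by omega)]
  -- cyc_edge
  · intro u hu w hw h
    rw [mem'] at hu hw
    rcases hu with huv | hu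
    · rw [huv] at h ⊢
      have hw0 : (pos' w).val = 0 := by
        rw [h, zadd1_val (by omega : 2 ≤ m + 1), posv, if_pos rfl]
      rcases hw with hwv | hw
      · rw [hwv, posv] at hw0
        omega
      · rw [back0 w hw hw0]
        exact (adjv B).mpr (Or.inr rfl)
    · rcases hw with hwv | hw
      · rw [hwv] at h ⊢
        have huv : u ≠ v := hold u hu
        have hA' : (pos' u).val = m - 1 := by
          have := congrArg ZMod.val h
          rw [posv, zadd1_val (by omega : 2 ≤ m + 1),
            if_neg (by have := hvlt u huv; omega)] at this
          have := hvlt u huv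
          omega
        rw [backm1 u hu hA']
        exact (adj' A v).mpr (Or.inr (Or.inr (Or.inl ⟨rfl, rfl⟩)))
      · obtain ⟨hcyc, -⟩ := (key u w hu hw).mp h
        exact (adj' u w).mpr (Or.inl (inv.cyc_edge u hu w hw hcyc))
  -- cyc_one
  · intro u w hadj h
    have hu' : u ∈ H'.verts := H'.edge_vert hadj
    have hw' : w ∈ H'.verts := H'.edge_vert hadj.symm
    rw [mem'] at hu' hw'
    rcases hu' with huv | hu
    · rw [huv] at hadj h ⊢
      rcases hw' with hwv | hw
      · rw [hwv] at hadj
        exact absurd hadj (irr' v)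
      · have hw0 : (pos' w).val = 0 := by
          rw [h, zadd1_val (by omega : 2 ≤ m + 1), posv, if_pos rfl]
        rw [back0 w hw hw0, comm_vB]
        exact Set.ncard_singleton _
    · rcases hw' with hwv | hw
      · rw [hwv] at hadj h ⊢
        have huv : u ≠ v := hold u hu
        have hA' : (pos' u).val = m - 1 := by
          have := congrArg ZMod.val h
          rw [posv, zadd1_val (by omega : 2 ≤ m + 1),
            if_neg (by have := hvlt u huv; omega)] at this
          have := hvlt u huv
          omega
        rw [backm1 u hu hA', swap_comm, comm_vA]
        exact Set.ncard_singleton _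
      · obtain ⟨hcyc, huA⟩ := (key u w hu hw).mp h
        have huw : u ≠ w := (H'.adj_sub hadj).ne
        have hadj0 : H.Adj u w := by
          rcases (adj' u w).mp hadj with h' | ⟨h', -⟩ | ⟨-, h'⟩ | ⟨h', -⟩ | ⟨-, h'⟩
          · exact h'
          · exact absurd h' (hold u hu)
          · exact absurd h' (hold w hw)
          · exact absurd h' (hold u hu)
          · exact absurd h' (hold w hw)
        rw [comm_old u w hu hw huw (fun hcc => huA hcc.1)
          (fun hcc => notBA (by rw [hcc.1, hcc.2] at hcyc; exact hcyc))]
        exact inv.cyc_one u w hadj0 hcyc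
  -- chord_ne_one
  · intro u w hadj h1 h2
    have hu' : u ∈ H'.verts := H'.edge_vert hadj
    have hw' : w ∈ H'.verts := H'.edge_vert hadj.symm
    rw [mem'] at hu' hw'
    rcases hu' with huv | hu
    · rw [huv] at hadj h1 h2
      rcases (adjv w).mp hadj with hh | hh <;> rw [hh] at h1 h2
      · exact absurd cyc_Av h2
      · exact absurd cyc_vB h1
    · rcases hw' with hwv | hw
      · rw [hwv] at hadj h1 h2
        rcases (adjv u).mp hadj.symm with hh | hh <;> rw [hh] at h1 h2
        · exact absurd cyc_Av h1
        · exact absurd cyc_vB h2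
      · have huw : u ≠ w := (H'.adj_sub hadj).ne
        have hadj0 : H.Adj u w := by
          rcases (adj' u w).mp hadj with h' | ⟨h', -⟩ | ⟨-, h'⟩ | ⟨h', -⟩ | ⟨-, h'⟩
          · exact h'
          · exact absurd h' (hold u hu)
          · exact absurd h' (hold w hw)
          · exact absurd h' (hold u hu)
          · exact absurd h' (hold w hw)
        by_cases hc1 : u = A ∧ w = B
        · rw [hc1.1, hc1.2, comm_AB, Set.ncard_insert_of_notMem (fun hh => noadjv' A hh.1)
            (Set.toFinite _), inv.cyc_one A B hAB horder]
          omega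
        · by_cases hc2 : u = B ∧ w = A
          · rw [hc2.1, hc2.2, swap_comm, comm_AB,
              Set.ncard_insert_of_notMem (fun hh => noadjv' A hh.1)
              (Set.toFinite _), inv.cyc_one A B hAB horder]
            omega
          · obtain ⟨hh1, hh2⟩ := oldchord u w hu hw h1 h2 hc1 hc2
            rw [comm_old u w hu hw huw hc1 hc2]
            exact inv.chord_ne_one u w hadj0 hh1 hh2
  -- chord_side
  · intro u w hadj h1 h2 x y hxy
    have hu' : u ∈ H'.verts := H'.edge_vert hadj
    have hw' : w ∈ H'.verts := H'.edge_vert hadj.symm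
    rw [mem'] at hu' hw'
    rcases hu' with huv | hu
    · exfalso
      rw [huv] at hadj h1 h2
      rcases (adjv w).mp hadj with hh | hh <;> rw [hh] at h1 h2
      · exact absurd cyc_Av h2
      · exact absurd cyc_vB h1
    rcases hw' with hwv | hw
    · exfalso
      rw [hwv] at hadj h1 h2
      rcases (adjv u).mp hadj.symm with hh | hh <;> rw [hh] at h1 h2
      · exact absurd cyc_Av h1
      · exact absurd cyc_vB h2
    have huw : u ≠ w := (H'.adj_sub hadj).ne
    have hadj0 : H.Adj u w := by
      rcases (adj' u w).mp hadj with h' | ⟨h', -⟩ | ⟨-, h'⟩ | ⟨h', -⟩ | ⟨-, h'⟩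
      · exact h'
      · exact absurd h' (hold u hu)
      · exact absurd h' (hold w hw)
      · exact absurd h' (hold u hu)
      · exact absurd h' (hold w hw)
    have hau := hvlt u (hold u hu)
    have haw := hvlt w (hold w hw)
    have dAB : (pos' B - pos' A).val = 2 := by
      rw [zsub_val, posA, posB, if_neg (by omega)]
      omega
    have dBA : (pos' A - pos' B).val = m - 1 := by
      rw [zsub_val, posA, posB, if_pos (by omega)]
      omega
    have oldsideB : ∀ t, t ∈ H.verts → (pos' t - pos' B).val ≤ (pos' A - pos' B).val := by
      intro t ht
      rw [dBA, zsub_val, posB, if_pos (by omega)]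
      have := hvlt t (hold t ht)
      omega
    have vsideA : ∀ t, (t = v ∨ t = A ∨ t = B) →
        (pos' t - pos' A).val ≤ (pos' B - pos' A).val := by
      intro t ht
      rw [dAB]
      rcases ht with hh | hh | hh <;> rw [hh]
      · rw [zsub_val, posv, posA, if_pos (by omega)]; omega
      · rw [sub_self, ZMod.val_zero]; omega
      · rw [zsub_val, posB, posA, if_neg (by omega)]; omega
    by_cases hc1 : u = A ∧ w = B
    · rw [hc1.1, hc1.2]
      rcases (adj' x y).mp hxy with h' | h' | h' | h' | h'
      · exact Or.inr ⟨oldsideB x (H.edge_vert h'), oldsideB y (H.edge_vert h'.symm)⟩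
      · rw [h'.1, h'.2]
        exact Or.inl ⟨vsideA v (Or.inl rfl), vsideA A (Or.inr (Or.inl rfl))⟩
      · rw [h'.1, h'.2]
        exact Or.inl ⟨vsideA A (Or.inr (Or.inl rfl)), vsideA v (Or.inl rfl)⟩
      · rw [h'.1, h'.2]
        exact Or.inl ⟨vsideA v (Or.inl rfl), vsideA B (Or.inr (Or.inr rfl))⟩
      · rw [h'.1, h'.2]
        exact Or.inl ⟨vsideA B (Or.inr (Or.inr rfl)), vsideA v (Or.inl rfl)⟩
    by_cases hc2 : u = B ∧ w = A
    · rw [hc2.1, hc2.2]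
      rcases (adj' x y).mp hxy with h' | h' | h' | h' | h'
      · exact Or.inl ⟨oldsideB x (H.edge_vert h'), oldsideB y (H.edge_vert h'.symm)⟩
      · rw [h'.1, h'.2]
        exact Or.inr ⟨vsideA v (Or.inl rfl), vsideA A (Or.inr (Or.inl rfl))⟩
      · rw [h'.1, h'.2]
        exact Or.inr ⟨vsideA A (Or.inr (Or.inl rfl)), vsideA v (Or.inl rfl)⟩
      · rw [h'.1, h'.2]
        exact Or.inr ⟨vsideA v (Or.inl rfl), vsideA B (Or.inr (Or.inr rfl))⟩
      · rw [h'.1, h'.2]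
        exact Or.inr ⟨vsideA B (Or.inr (Or.inr rfl)), vsideA v (Or.inl rfl)⟩
    -- old chord
    obtain ⟨hh1, hh2⟩ := oldchord u w hu hw h1 h2 hc1 hc2
    have hne : (pos' u).val ≠ (pos' w).val := by
      intro hh
      rw [hval u (hold u hu), hval w (hold w hw)] at hh
      exact huw (inv.inj u hu w hw (sub_left_inj.mp (zval_inj hh)))
    have sideall : (∀ t, (t = v ∨ t = A ∨ t = B) →
        (pos' t - pos' u).val ≤ (pos' w - pos' u).val) ∨
        (∀ t, (t = v ∨ t = A ∨ t = B) →
        (pos' t - pos' w).val ≤ (pos' u - pos' w).val) := by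
      rcases lt_or_gt_of_ne hne with hlt | hgt
      · right
        intro t ht
        have hRHS : (pos' u - pos' w).val = (pos' u).val + (m + 1) - (pos' w).val := by
          rw [zsub_val, if_neg (by omega)]
        rw [hRHS]
        rcases ht with hh | hh | hh <;> rw [hh]
        · rw [zsub_val, posv, if_pos (by omega)]; omega
        · rw [zsub_val, posA, if_pos (by omega)]; omega
        · rw [zsub_val, posB]
          by_cases hB0 : (pos' w).val ≤ 0
          · rw [if_pos hB0]; omega
          · rw [if_neg hB0]; omega
      · left
        intro t ht
        have hRHS : (pos' w - pos' u).val = (pos' w).val + (m + 1) - (pos' u).val := by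
          rw [zsub_val, if_neg (by omega)]
        rw [hRHS]
        rcases ht with hh | hh | hh <;> rw [hh]
        · rw [zsub_val, posv, if_pos (by omega)]; omega
        · rw [zsub_val, posA, if_pos (by omega)]; omega
        · rw [zsub_val, posB]
          by_cases hB0 : (pos' u).val ≤ 0
          · rw [if_pos hB0]; omega
          · rw [if_neg hB0]; omega
    rcases (adj' x y).mp hxy with h' | h' | h' | h' | h'
    · have hx := H.edge_vert h'
      have hy := H.edge_vert h'.symm
      rcases inv.chord_side u w hadj0 hh1 hh2 x y h' with ⟨s1, s2⟩ | ⟨s1, s2⟩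
      · exact Or.inl ⟨shift_le x u w (hold x hx) (hold u hu) (hold w hw) s1,
          shift_le y u w (hold y hy) (hold u hu) (hold w hw) s2⟩
      · exact Or.inr ⟨shift_le x w u (hold x hx) (hold w hw) (hold u hu) s1,
          shift_le y w u (hold y hy) (hold w hw) (hold u hu) s2⟩
    · rw [h'.1, h'.2]
      rcases sideall with hs | hs
      · exact Or.inl ⟨hs v (Or.inl rfl), hs A (Or.inr (Or.inl rfl))⟩
      · exact Or.inr ⟨hs v (Or.inl rfl), hs A (Or.inr (Or.inl rfl))⟩
    · rw [h'.1, h'.2]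
      rcases sideall with hs | hs
      · exact Or.inl ⟨hs A (Or.inr (Or.inl rfl)), hs v (Or.inl rfl)⟩
      · exact Or.inr ⟨hs A (Or.inr (Or.inl rfl)), hs v (Or.inl rfl)⟩
    · rw [h'.1, h'.2]
      rcases sideall with hs | hs
      · exact Or.inl ⟨hs v (Or.inl rfl), hs B (Or.inr (Or.inr rfl))⟩
      · exact Or.inr ⟨hs v (Or.inl rfl), hs B (Or.inr (Or.inr rfl))⟩
    · rw [h'.1, h'.2]
      rcases sideall with hs | hs
      · exact Or.inl ⟨hs B (Or.inr (Or.inr rfl)), hs v (Or.inl rfl)⟩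
      · exact Or.inr ⟨hs B (Or.inr (Or.inr rfl)), hs v (Or.inl rfl)⟩

lemma seq_inv {V : Type*} [Finite V] {G : SimpleGraph V} {n : ℕ} (T : TriangleSeq G n) :
    ∃ pos : V → ZMod n, CycInv (T.M n) n pos := by
  suffices h : ∀ i, 3 ≤ i → i ≤ n → ∃ pos : V → ZMod i, CycInv (T.M i) i pos from
    h n T.three_le le_rfl
  intro i hi
  induction i, hi using Nat.le_induction with
  | base =>
    intro _
    obtain ⟨a, b, c, hab, hac, hbc, hV, hE⟩ := T.base
    exact base_inv hab hac hbc hV hE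
  | succ i hi ih =>
    intro hin
    obtain ⟨v, A, B, hv, hAB, hone, hverts, hedges⟩ := T.step (i + 1) (by omega) hin
    simp only [Nat.add_sub_cancel] at hv hAB hone hverts hedges
    obtain ⟨pos, inv⟩ := ih (by omega)
    have horder : pos B = pos A + 1 ∨ pos A = pos B + 1 := by
      by_contra h
      push_neg at h
      exact inv.chord_ne_one A B hAB h.1 h.2 hone
    rcases horder with h | h
    · exact step_inv inv hv hAB h hverts hedges
    · exact step_inv inv hv hAB.symm h hverts (by rw [hedges, Set.pair_comm])

set_option maxHeartbeats 1000000 in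
/-- For an edge `ab` of `Mₙ` not in `S(Mₙ)`, the pair `{a,b}` separates `Mₙ`,
and the two neighbours of `a` along the spanning cycle `S(Mₙ)` lie in different
components of `Mₙ - {a,b}`. -/
theorem stmt15 {V : Type*} [Finite V] (G : SimpleGraph V) (n : ℕ)
    (T : TriangleSeq G n) (a b : V)
    (hab : s(a, b) ∈ (T.M n).edgeSet) (hnS : s(a, b) ∉ Sset (T.M n)) :
    ¬ ((T.M n).deleteVerts {a, b}).coe.Connected ∧
    ∀ aL aR : V, s(a, aL) ∈ Sset (T.M n) → s(a, aR) ∈ Sset (T.M n) → aL ≠ aR →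
      ∀ x y : ((T.M n).deleteVerts {a, b}).verts, (x : V) = aL → (y : V) = aR →
        ¬ ((T.M n).deleteVerts {a, b}).coe.Reachable x y := by
  classical
  obtain ⟨pos, inv⟩ := seq_inv T
  have hm := inv.hm
  haveI : NeZero n := ⟨by omega⟩
  haveI : Fact (1 < n) := ⟨by omega⟩
  have hone' : (1 : ZMod n).val = 1 := ZMod.val_one n
  have negone' : ((-1 : ZMod n)).val = n - 1 := by
    rw [ZMod.neg_val, if_neg one_ne_zero, hone']
  have hadj : (T.M n).Adj a b := Subgraph.mem_edgeSet.mp hab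
  have haV : a ∈ (T.M n).verts := (T.M n).edge_vert hadj
  have hbV : b ∈ (T.M n).verts := (T.M n).edge_vert hadj.symm
  have hane : a ≠ b := ((T.M n).adj_sub hadj).ne
  have swapset : ∀ u w : V, {c | (T.M n).Adj u c ∧ (T.M n).Adj w c} =
      {c | (T.M n).Adj w c ∧ (T.M n).Adj u c} := by
    intro u w; ext c; exact and_comm
  have hOne : ¬ OneTriangle (T.M n) a b := by
    intro h
    apply hnS
    refine ⟨hab, ?_⟩
    intro a' b' he
    rcases Sym2.eq_iff.mp he with ⟨h1, h2⟩ | ⟨h1, h2⟩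
    · rw [← h1, ← h2]; exact h
    · rw [← h2, ← h1]
      unfold OneTriangle at h ⊢
      rw [swapset]; exact h
  have hchord1 : pos b ≠ pos a + 1 := fun h => hOne (inv.cyc_one a b hadj h)
  have hchord2 : pos a ≠ pos b + 1 := by
    intro h
    apply hOne
    unfold OneTriangle
    rw [swapset]
    exact inv.cyc_one b a hadj.symm h
  have hpne : pos a ≠ pos b := fun h => hane (inv.inj _ haV _ hbV h)
  have hdlt := ZMod.val_lt (pos b - pos a)
  have hd0 : (pos b - pos a).val ≠ 0 := by
    intro h
    exact hpne (sub_eq_zero.mp (zval_inj (by rw [h, ZMod.val_zero]))).symm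
  have hd1 : (pos b - pos a).val ≠ 1 := by
    intro h
    apply hchord1
    have h2 : pos b - pos a = 1 := zval_inj (by rw [h, hone'])
    rw [sub_eq_iff_eq_add] at h2
    rw [h2, add_comm]
  have hdm : (pos b - pos a).val ≠ n - 1 := by
    intro h
    apply hchord2
    have h2 : pos b - pos a = -1 := zval_inj (by rw [h, negone'])
    linear_combination -h2
  have hd' : (pos a - pos b).val = n - (pos b - pos a).val := by
    have e : pos a - pos b = -(pos b - pos a) := by ring
    rw [e, ZMod.neg_val, if_neg (fun hh => hd0 (by rw [hh, ZMod.val_zero]))]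
  set W1 : Set V := {t : V | (pos t - pos a).val ≤ (pos b - pos a).val} with hW1def
  set W2 : Set V := {t : V | (pos t - pos b).val ≤ (pos a - pos b).val} with hW2def
  have hcap : ∀ t, t ∈ (T.M n).verts → t ∈ W1 → t ∈ W2 → t = a ∨ t = b := by
    intro t ht h1 h2
    rw [hW1def, Set.mem_setOf_eq] at h1
    rw [hW2def, Set.mem_setOf_eq, hd'] at h2
    have e : pos t - pos b = (pos t - pos a) - (pos b - pos a) := by ring
    have E : (pos t - pos b).val = if (pos b - pos a).val ≤ (pos t - pos a).val
        then (pos t - pos a).val - (pos b - pos a).val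
        else (pos t - pos a).val + n - (pos b - pos a).val := by rw [e, zsub_val]
    rw [E] at h2
    split_ifs at h2 with hc
    · right
      exact inv.inj t ht b hbV (sub_left_inj.mp (zval_inj (le_antisymm h1 hc)))
    · left
      have hs0 : (pos t - pos a).val = 0 := by omega
      exact inv.inj t ht a haV
        (sub_eq_zero.mp (zval_inj (by rw [hs0, ZMod.val_zero])))
  have hW1step : ∀ x y, (T.M n).Adj x y → x ∈ W1 → x ≠ a → x ≠ b → y ∈ W1 := by
    intro x y hxy hx hxa hxb
    rcases inv.chord_side a b hadj hchord1 hchord2 x y hxy with ⟨s1, s2⟩ | ⟨s1, s2⟩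
    · exact s2
    · rcases hcap x ((T.M n).edge_vert hxy) hx s1 with h | h
      · exact absurd h hxa
      · exact absurd h hxb
  have hW2step : ∀ x y, (T.M n).Adj x y → x ∈ W2 → x ≠ a → x ≠ b → y ∈ W2 := by
    intro x y hxy hx hxa hxb
    rcases inv.chord_side a b hadj hchord1 hchord2 x y hxy with ⟨s1, s2⟩ | ⟨s1, s2⟩
    · rcases hcap x ((T.M n).edge_vert hxy) s1 hx with h | h
      · exact absurd h hxa
      · exact absurd h hxb
    · exact s2
  have hstep : ∀ (W : Set V), (∀ x y, (T.M n).Adj x y → x ∈ W → x ≠ a → x ≠ b → y ∈ W) →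
      ∀ (x y : ((T.M n).deleteVerts {a, b}).verts),
        ((T.M n).deleteVerts {a, b}).coe.Reachable x y → (x : V) ∈ W → (y : V) ∈ W := by
    intro W hW x y hr
    obtain ⟨wk⟩ := hr
    induction wk with
    | nil => exact fun hx => hx
    | cons h p ih =>
      intro hx
      apply ih
      rw [Subgraph.coe_adj, Subgraph.deleteVerts_adj] at h
      obtain ⟨hu1, hu2, hv1, hv2, hadj'⟩ := h
      refine hW _ _ hadj' hx (fun e => hu2 ?_) (fun e => hu2 ?_)
      · rw [e]; exact Set.mem_insert _ _
      · rw [e]; exact Set.mem_insert_of_mem _ rfl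
  -- membership facts for cycle-neighbours of a and b
  have succa_W1 : ∀ t, pos t = pos a + 1 → t ∈ W1 := by
    intro t ht
    rw [hW1def, Set.mem_setOf_eq, ht]
    have e : pos a + 1 - pos a = 1 := by ring
    rw [e, hone']
    omega
  have succa_nW2 : ∀ t, pos t = pos a + 1 → t ∉ W2 := by
    intro t ht
    rw [hW2def, Set.mem_setOf_eq, ht, hd']
    have e : pos a + 1 - pos b = (pos a - pos b) + 1 := by ring
    rw [e, zadd1_val (by omega), hd', if_neg (by omega)]
    omega
  have preda_nW1 : ∀ t, pos a = pos t + 1 → t ∉ W1 := by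
    intro t ht
    rw [hW1def, Set.mem_setOf_eq]
    have e : pos t - pos a = -1 := by rw [ht]; ring
    rw [e, negone']
    omega
  have preda_W2 : ∀ t, pos a = pos t + 1 → t ∈ W2 := by
    intro t ht
    rw [hW2def, Set.mem_setOf_eq, hd']
    have e : pos t - pos b = (pos a - pos b) - 1 := by rw [ht]; ring
    have E : (pos t - pos b).val = if (1 : ZMod n).val ≤ (pos a - pos b).val
        then (pos a - pos b).val - (1 : ZMod n).val
        else (pos a - pos b).val + n - (1 : ZMod n).val := by rw [e, zsub_val]
    rw [E, hone', hd', if_pos (by omega)]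
    omega
  have succb_W2 : ∀ t, pos t = pos b + 1 → t ∈ W2 := by
    intro t ht
    rw [hW2def, Set.mem_setOf_eq, ht, hd']
    have e : pos b + 1 - pos b = 1 := by ring
    rw [e, hone']
    omega
  have succb_nW1 : ∀ t, pos t = pos b + 1 → t ∉ W1 := by
    intro t ht
    rw [hW1def, Set.mem_setOf_eq, ht]
    have e : pos b + 1 - pos a = (pos b - pos a) + 1 := by ring
    rw [e, zadd1_val (by omega), if_neg (by omega)]
    omega
  constructor
  · -- not connected
    intro hconn
    obtain ⟨u1, hu1V, hu1⟩ := inv.surj (pos a + 1)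
    obtain ⟨u2, hu2V, hu2⟩ := inv.surj (pos b + 1)
    have hu1a : u1 ≠ a := by
      intro e
      rw [e] at hu1
      have h1 := congrArg ZMod.val hu1
      rw [zadd1_val (by omega)] at h1
      have h2 := ZMod.val_lt (pos a)
      split_ifs at h1 <;> omega
    have hu1b : u1 ≠ b := fun e => hchord1 (by rw [← e, hu1])
    have hu2b : u2 ≠ b := by
      intro e
      rw [e] at hu2
      have h1 := congrArg ZMod.val hu2
      rw [zadd1_val (by omega)] at h1
      have h2 := ZMod.val_lt (pos b)
      split_ifs at h1 <;> omega
    have hu2a : u2 ≠ a := fun e => hchord2 (by rw [← e, hu2])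
    have hm1 : u1 ∈ ((T.M n).deleteVerts {a, b}).verts := by
      rw [Subgraph.deleteVerts_verts]
      refine ⟨hu1V, ?_⟩
      simp only [Set.mem_insert_iff, Set.mem_singleton_iff]
      push_neg
      exact ⟨hu1a, hu1b⟩
    have hm2 : u2 ∈ ((T.M n).deleteVerts {a, b}).verts := by
      rw [Subgraph.deleteVerts_verts]
      refine ⟨hu2V, ?_⟩
      simp only [Set.mem_insert_iff, Set.mem_singleton_iff]
      push_neg
      exact ⟨hu2a, hu2b⟩
    have hr := hconn.preconnected ⟨u1, hm1⟩ ⟨u2, hm2⟩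
    have := hstep W1 hW1step ⟨u1, hm1⟩ ⟨u2, hm2⟩ hr (succa_W1 u1 hu1)
    exact succb_nW1 u2 hu2 this
  · -- second part
    intro aL aR hL hR hLR x y hx hy hr
    have hadjL : (T.M n).Adj a aL := Subgraph.mem_edgeSet.mp hL.1
    have hadjR : (T.M n).Adj a aR := Subgraph.mem_edgeSet.mp hR.1
    have haLV : aL ∈ (T.M n).verts := (T.M n).edge_vert hadjL.symm
    have haRV : aR ∈ (T.M n).verts := (T.M n).edge_vert hadjR.symm
    have hcycL : pos aL = pos a + 1 ∨ pos a = pos aL + 1 := by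
      by_contra h
      push_neg at h
      exact inv.chord_ne_one a aL hadjL h.1 h.2 (hL.2 a aL rfl)
    have hcycR : pos aR = pos a + 1 ∨ pos a = pos aR + 1 := by
      by_contra h
      push_neg at h
      exact inv.chord_ne_one a aR hadjR h.1 h.2 (hR.2 a aR rfl)
    rcases hcycL with hL' | hL' <;> rcases hcycR with hR' | hR'
    · exact hLR (inv.inj aL haLV aR haRV (by rw [hL', hR']))
    · -- aL succ, aR pred : aL ∈ W1, aR ∉ W1
      have h1 : (x : V) ∈ W1 := by rw [hx]; exact succa_W1 aL hL'
      have := hstep W1 hW1step x y hr h1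
      rw [hy] at this
      exact preda_nW1 aR hR' this
    · -- aL pred, aR succ
      have h1 : (y : V) ∈ W1 := by rw [hy]; exact succa_W1 aR hR'
      have := hstep W1 hW1step y x hr.symm h1
      rw [hx] at this
      exact preda_nW1 aL hL' this
    · exact hLR (inv.inj aL haLV aR haRV (by
        have := hL'.symm.trans hR'
        exact add_right_cancel this))
end

section
/- Let G be a (2,ℓ)-tight simple graph for ℓ ∈ {1,2} containing a subgraph K isomorphic to K₄, and let G/K be obtained by contracting K to a single vertex v* (identifying the four vertices of K, deleting the edges of K, and replacing each edge from a vertex outside K to a vertex of K by an edge to v*). Suppose no triangle of G has exactly two vertices in K. Then G/K is a simple graph and is (2,ℓ)-tight. -/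
open SimpleGraph

/-- The graph `G/K` obtained by contracting the vertex set `s` (here a copy of `K₄`)
to the single new vertex `Sum.inr ()`. -/
def contractGraph {V : Type*} (G : SimpleGraph V) (s : Set V) :
    SimpleGraph ({x : V // x ∉ s} ⊕ Unit) :=
  SimpleGraph.fromRel (fun x y =>
    (∃ a b : {x : V // x ∉ s}, x = Sum.inl a ∧ y = Sum.inl b ∧ G.Adj a.1 b.1) ∨
    (∃ (a : {x : V // x ∉ s}) (w : V), x = Sum.inl a ∧ y = Sum.inr () ∧
      w ∈ s ∧ G.Adj a.1 w))

/-!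
Every subgraph `H` of `G/K` pulls back to a subgraph of `G`: take the preimages of its vertices
and edges, together with the six edges of `K` when `H` contains the contracted vertex. Since no
outside vertex has two neighbours in `K` (that would be a triangle meeting `K` twice), the
contraction map is injective on the edges outside `K`. So the pullback has `3` more vertices and
`6` more edges than `H`, or exactly as many of both, and `2|V| - |E|` is unchanged. Sparsity of
the pullback thus gives sparsity of `H`, and the pullback of `G/K` itself is `G`.
-/

theorem Sym2.mk_mem_image_offDiag_iff {V : Type*} {s : Set V} {u v : V} :
    s(u, v) ∈ Sym2.mk.uncurry '' s.offDiag ↔ u ∈ s ∧ v ∈ s ∧ u ≠ v := by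
  constructor
  · rintro ⟨⟨a, b⟩, ⟨ha, hb, hab⟩, h⟩
    rcases Sym2.eq_iff.mp h with ⟨rfl, rfl⟩ | ⟨rfl, rfl⟩
    · exact ⟨ha, hb, hab⟩
    · exact ⟨hb, ha, hab.symm⟩
  · rintro ⟨hu, hv, huv⟩
    exact ⟨(u, v), ⟨hu, hv, huv⟩, rfl⟩

theorem Set.ncard_image_mk_offDiag {V : Type*} [Finite V] (s : Set V) :
    (Sym2.mk.uncurry '' s.offDiag).ncard = s.ncard.choose 2 := by
  classical
  obtain ⟨t, rfl⟩ := s.toFinite.exists_finset_coe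
  rw [← Finset.coe_offDiag, ← Finset.coe_image, Set.ncard_coe_finset, Set.ncard_coe_finset,
    Sym2.card_image_offDiag]

theorem Set.ncard_preimage_inl_add_ncard_preimage_inr_s18 {α β : Type*} [Finite α] [Finite β]
    (T : Set (α ⊕ β)) : (Sum.inl ⁻¹' T).ncard + (Sum.inr ⁻¹' T).ncard = T.ncard := by
  conv_rhs => rw [← Set.image_preimage_inl_union_image_preimage_inr T]
  rw [Set.ncard_union_eq Set.disjoint_image_inl_image_inr,
    Set.ncard_image_of_injective _ Sum.inl_injective,
    Set.ncard_image_of_injective _ Sum.inr_injective]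

section ContractMap

variable {V : Type*} {s : Set V}

open Classical in
noncomputable def contractMap (s : Set V) (v : V) : {x : V // x ∉ s} ⊕ Unit :=
  if h : v ∈ s then Sum.inr () else Sum.inl ⟨v, h⟩

theorem contractMap_of_mem {v : V} (h : v ∈ s) : contractMap s v = Sum.inr () := by
  simp [contractMap, h]

theorem contractMap_of_notMem {v : V} (h : v ∉ s) : contractMap s v = Sum.inl ⟨v, h⟩ := by
  simp [contractMap, h]

@[simp]
theorem contractMap_val (a : {x : V // x ∉ s}) : contractMap s a.1 = Sum.inl a :=
  contractMap_of_notMem a.2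

theorem contractMap_eq_contractMap_iff {v w : V} :
    contractMap s v = contractMap s w ↔ v = w ∨ v ∈ s ∧ w ∈ s := by
  by_cases hv : v ∈ s <;> by_cases hw : w ∈ s <;>
    simp [contractMap_of_mem, contractMap_of_notMem, hv, hw]
  all_goals grind

theorem contractGraph_adj_iff {G : SimpleGraph V} {x y : {x : V // x ∉ s} ⊕ Unit} :
    (contractGraph G s).Adj x y ↔
      x ≠ y ∧ ∃ u v, G.Adj u v ∧ contractMap s u = x ∧ contractMap s v = y := by
  refine (fromRel_adj _ _ _).trans (and_congr_right fun hxy => ⟨?_, ?_⟩)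
  · rintro ((⟨a, b, rfl, rfl, h⟩ | ⟨a, w, rfl, rfl, hw, h⟩) |
      (⟨a, b, rfl, rfl, h⟩ | ⟨a, w, rfl, rfl, hw, h⟩))
    · exact ⟨a, b, h, by simp, by simp⟩
    · exact ⟨a, w, h, by simp, contractMap_of_mem hw⟩
    · exact ⟨b, a, h.symm, by simp, by simp⟩
    · exact ⟨w, a, h.symm, contractMap_of_mem hw, by simp⟩
  · rintro ⟨u, v, h, rfl, rfl⟩
    by_cases hu : u ∈ s <;> by_cases hv : v ∈ s
    · exact absurd (by rw [contractMap_of_mem hu, contractMap_of_mem hv]) hxy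
    · exact Or.inr (Or.inr ⟨⟨v, hv⟩, u, contractMap_of_notMem hv, contractMap_of_mem hu, hu,
        h.symm⟩)
    · exact Or.inl (Or.inr ⟨⟨u, hu⟩, v, contractMap_of_notMem hu, contractMap_of_mem hv, hv, h⟩)
    · exact Or.inl (Or.inl ⟨⟨u, hu⟩, ⟨v, hv⟩, contractMap_of_notMem hu, contractMap_of_notMem hv,
        h⟩)

theorem preimage_contractMap (T : Set ({x : V // x ∉ s} ⊕ Unit)) :
    contractMap s ⁻¹' T = Subtype.val '' (Sum.inl ⁻¹' T) ∪ {v ∈ s | Sum.inr () ∈ T} := by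
  ext v
  by_cases hv : v ∈ s <;> simp [contractMap_of_mem, contractMap_of_notMem, hv]

variable [Finite V] {T : Set ({x : V // x ∉ s} ⊕ Unit)}

theorem ncard_preimage_contractMap :
    (contractMap s ⁻¹' T).ncard = (Sum.inl ⁻¹' T).ncard + {v ∈ s | Sum.inr () ∈ T}.ncard := by
  rw [preimage_contractMap, Set.ncard_union_eq,
    Set.ncard_image_of_injective _ Subtype.val_injective]
  rw [Set.disjoint_left]
  rintro _ ⟨a, -, rfl⟩ ⟨ha, -⟩
  exact a.2 ha

theorem ncard_preimage_contractMap_of_inr_mem (hT : Sum.inr () ∈ T) :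
    (contractMap s ⁻¹' T).ncard + 1 = T.ncard + s.ncard := by
  have hr : Sum.inr ⁻¹' T = Set.univ := Set.eq_univ_of_forall fun _ => hT
  rw [ncard_preimage_contractMap, ← Set.ncard_preimage_inl_add_ncard_preimage_inr_s18 T, hr]
  simp only [hT, and_true, Set.ofPred_mem_eq, Set.ncard_univ, Nat.card_unique]
  omega

theorem ncard_preimage_contractMap_of_inr_notMem (hT : Sum.inr () ∉ T) :
    (contractMap s ⁻¹' T).ncard = T.ncard := by
  have hr : Sum.inr ⁻¹' T = ∅ := Set.eq_empty_of_forall_notMem fun _ => hT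
  rw [ncard_preimage_contractMap, ← Set.ncard_preimage_inl_add_ncard_preimage_inr_s18 T, hr]
  simp only [hT, and_false, Set.ofPred_false, Set.ncard_empty, add_zero]

end ContractMap

section Pullback

variable {V : Type*} {G : SimpleGraph V} {s : Set V}

theorem subsingleton_adj_of_isClique_of_triangle (hK : G.IsClique s)
    (htri : ∀ a b c : V, G.Adj a b → G.Adj b c → G.Adj a c →
      (({a, b, c} : Set V) ∩ s).ncard ≠ 2) {x : V} (hx : x ∉ s) :
    {w ∈ s | G.Adj x w}.Subsingleton := by
  rintro w ⟨hw, hxw⟩ w' ⟨hw', hxw'⟩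
  by_contra hne
  apply htri w x w' hxw.symm hxw' (hK hw hw' hne)
  have : ({w, x, w'} : Set V) ∩ s = {w, w'} := by
    ext v
    simp only [Set.mem_inter_iff, Set.mem_insert_iff, Set.mem_singleton_iff]
    constructor
    · rintro ⟨rfl | rfl | rfl, hv⟩
      · exact Or.inl rfl
      · exact absurd hv hx
      · exact Or.inr rfl
    · rintro (rfl | rfl)
      · exact ⟨Or.inl rfl, hw⟩
      · exact ⟨Or.inr (Or.inr rfl), hw'⟩
  rw [this, Set.ncard_pair hne]

theorem injOn_map_contractMap (hone : ∀ x ∉ s, {w ∈ s | G.Adj x w}.Subsingleton) :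
    Set.InjOn (Sym2.map (contractMap s)) (G.edgeSet \ Sym2.mk.uncurry '' s.offDiag) := by
  have outside : ∀ e ∈ G.edgeSet \ Sym2.mk.uncurry '' s.offDiag,
      ∃ u v, e = s(u, v) ∧ G.Adj u v ∧ u ∉ s := by
    rintro e ⟨he, hK⟩
    induction e using Sym2.ind with
    | _ u v =>
      by_cases hu : u ∈ s
      · refine ⟨v, u, Sym2.eq_swap, he.symm, fun hv => hK ?_⟩
        exact Sym2.mk_mem_image_offDiag_iff.mpr ⟨hu, hv, G.ne_of_adj he⟩
      · exact ⟨u, v, rfl, he, hu⟩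
  rintro _ he _ he' h
  obtain ⟨u, v, rfl, huv, hu⟩ := outside _ he
  obtain ⟨u', v', rfl, huv', hu'⟩ := outside _ he'
  simp only [Sym2.map_mk, Sym2.eq_iff, contractMap_eq_contractMap_iff] at h
  rcases h with ⟨rfl | ⟨hus, -⟩, rfl | ⟨hv, hv'⟩⟩ | ⟨rfl | ⟨hus, -⟩, rfl | ⟨-, hus'⟩⟩
  · rfl
  · rw [hone u hu ⟨hv, huv⟩ ⟨hv', huv'⟩]
  all_goals first | exact Sym2.eq_swap | contradiction

noncomputable def contractPullback (H : (contractGraph G s).Subgraph) : G.Subgraph where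
  verts := contractMap s ⁻¹' H.verts
  Adj u v := G.Adj u v ∧
    (u ∈ s ∧ v ∈ s ∧ Sum.inr () ∈ H.verts ∨ H.Adj (contractMap s u) (contractMap s v))
  adj_sub h := h.1
  edge_vert := by
    rintro u v ⟨-, ⟨hu, -, hr⟩ | h⟩
    · rwa [Set.mem_preimage, contractMap_of_mem hu]
    · exact h.fst_mem
  symm := ⟨fun _ _ ⟨h, hs⟩ => ⟨h.symm, hs.imp (fun ⟨hu, hv, hr⟩ => ⟨hv, hu, hr⟩) (·.symm)⟩⟩

theorem verts_contractPullback (H : (contractGraph G s).Subgraph) :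
    (contractPullback H).verts = contractMap s ⁻¹' H.verts :=
  rfl

theorem contractPullback_top : contractPullback (⊤ : (contractGraph G s).Subgraph) = ⊤ := by
  refine Subgraph.ext rfl (funext₂ fun u v => propext ⟨And.left, fun huv => ⟨huv, ?_⟩⟩)
  by_cases h : u ∈ s ∧ v ∈ s
  · exact Or.inl ⟨h.1, h.2, trivial⟩
  · refine Or.inr (contractGraph_adj_iff.mpr ⟨fun he => ?_, u, v, huv, rfl, rfl⟩)
    rcases contractMap_eq_contractMap_iff.mp he with rfl | h'
    · exact huv.ne rfl
    · exact h h'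

variable {H : (contractGraph G s).Subgraph}

theorem image_map_edgeSet_contractPullback :
    Sym2.map (contractMap s) '' ((contractPullback H).edgeSet \ Sym2.mk.uncurry '' s.offDiag) =
      H.edgeSet := by
  ext e'
  constructor
  · rintro ⟨e, ⟨he, hK⟩, rfl⟩
    induction e using Sym2.ind with
    | _ u v =>
      obtain ⟨huv, ⟨hu, hv, -⟩ | h⟩ := he
      · exact absurd (Sym2.mk_mem_image_offDiag_iff.mpr ⟨hu, hv, huv.ne⟩) hK
      · exact h
  · intro h
    induction e' using Sym2.ind with
    | _ x y =>
      obtain ⟨hxy, u, v, huv, rfl, rfl⟩ := contractGraph_adj_iff.mp (H.adj_sub h)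
      refine ⟨s(u, v), ⟨⟨huv, Or.inr h⟩, fun hK => hxy ?_⟩, rfl⟩
      obtain ⟨hu, hv, -⟩ := Sym2.mk_mem_image_offDiag_iff.mp hK
      rw [contractMap_of_mem hu, contractMap_of_mem hv]

theorem edgeSet_contractPullback_nonempty (h : H.edgeSet.Nonempty) :
    (contractPullback H).edgeSet.Nonempty := by
  rw [← image_map_edgeSet_contractPullback] at h
  obtain ⟨_, ⟨e, ⟨he, -⟩, -⟩⟩ := h
  exact ⟨e, he⟩

theorem image_mk_offDiag_subset_edgeSet_contractPullback (hK : G.IsClique s)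
    (hr : Sum.inr () ∈ H.verts) :
    Sym2.mk.uncurry '' s.offDiag ⊆ (contractPullback H).edgeSet := by
  rintro _ ⟨⟨u, v⟩, ⟨hu, hv, huv⟩, rfl⟩
  exact ⟨hK hu hv huv, Or.inl ⟨hu, hv, hr⟩⟩

theorem disjoint_edgeSet_contractPullback_image_mk_offDiag (hr : Sum.inr () ∉ H.verts) :
    Disjoint (contractPullback H).edgeSet (Sym2.mk.uncurry '' s.offDiag) := by
  rw [Set.disjoint_left]
  intro e he hK
  induction e using Sym2.ind with
  | _ u v =>
    obtain ⟨hu, -, -⟩ := Sym2.mk_mem_image_offDiag_iff.mp hK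
    exact hr (contractMap_of_mem hu ▸ (contractPullback H).edge_vert he)

theorem ncard_edgeSet_contractPullback_of_inr_notMem
    (hone : ∀ x ∉ s, {w ∈ s | G.Adj x w}.Subsingleton) (hr : Sum.inr () ∉ H.verts) :
    (contractPullback H).edgeSet.ncard = H.edgeSet.ncard := by
  rw [← image_map_edgeSet_contractPullback, Set.InjOn.ncard_image,
    (disjoint_edgeSet_contractPullback_image_mk_offDiag hr).sdiff_eq_left]
  exact (injOn_map_contractMap hone).mono
    (Set.sdiff_subset_sdiff_left (Subgraph.edgeSet_subset _))

theorem ncard_edgeSet_contractPullback_of_inr_mem [Finite V]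
    (hone : ∀ x ∉ s, {w ∈ s | G.Adj x w}.Subsingleton) (hK : G.IsClique s)
    (hr : Sum.inr () ∈ H.verts) :
    (contractPullback H).edgeSet.ncard = H.edgeSet.ncard + s.ncard.choose 2 := by
  rw [← image_map_edgeSet_contractPullback, Set.InjOn.ncard_image,
    ← Set.ncard_image_mk_offDiag,
    Set.ncard_sdiff_add_ncard_of_subset (image_mk_offDiag_subset_edgeSet_contractPullback hK hr)]
  exact (injOn_map_contractMap hone).mono
    (Set.sdiff_subset_sdiff_left (Subgraph.edgeSet_subset _))

end Pullback

section Tight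

variable {V : Type*} [Finite V] {G : SimpleGraph V} {s : Set V} {ℓ : ℕ}

theorem sparse_contractGraph (hone : ∀ x ∉ s, {w ∈ s | G.Adj x w}.Subsingleton)
    (hK : G.IsClique s) (hs4 : s.ncard = 4) (hG : Sparse ℓ G) :
    Sparse ℓ (contractGraph G s) := by
  intro H hH
  have hsparse := hG (contractPullback H) (edgeSet_contractPullback_nonempty hH)
  rw [verts_contractPullback] at hsparse
  by_cases hr : Sum.inr () ∈ H.verts
  · have hverts := ncard_preimage_contractMap_of_inr_mem (s := s) hr
    rw [ncard_edgeSet_contractPullback_of_inr_mem hone hK hr, hs4, Nat.choose_two_right]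
      at hsparse
    omega
  · rwa [ncard_edgeSet_contractPullback_of_inr_notMem hone hr,
      ncard_preimage_contractMap_of_inr_notMem hr] at hsparse

theorem ncard_edgeSet_contractGraph_add (hone : ∀ x ∉ s, {w ∈ s | G.Adj x w}.Subsingleton)
    (hK : G.IsClique s) :
    (contractGraph G s).edgeSet.ncard + s.ncard.choose 2 = G.edgeSet.ncard := by
  have h := ncard_edgeSet_contractPullback_of_inr_mem (H := ⊤) hone hK (Set.mem_univ _)
  rw [contractPullback_top, Subgraph.edgeSet_top, Subgraph.edgeSet_top] at h
  exact h.symm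

theorem card_contractGraph_vertices_add (s : Set V) :
    Nat.card ({x : V // x ∉ s} ⊕ Unit) + s.ncard = Nat.card V + 1 := by
  have hcompl : Nat.card {x : V // x ∉ s} = sᶜ.ncard := Nat.card_coe_set_eq sᶜ
  rw [Nat.card_sum, hcompl, Nat.card_unique (α := Unit), ← Set.ncard_add_ncard_compl s]
  omega

theorem tight_contractGraph (hone : ∀ x ∉ s, {w ∈ s | G.Adj x w}.Subsingleton)
    (hK : G.IsClique s) (hs4 : s.ncard = 4) (hG : Tight ℓ G) :
    Tight ℓ (contractGraph G s) := by
  refine ⟨sparse_contractGraph hone hK hs4 hG.1, ?_⟩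
  have hE := ncard_edgeSet_contractGraph_add hone hK
  have hV := card_contractGraph_vertices_add s
  rw [hs4, Nat.choose_two_right] at hE
  rw [hs4] at hV
  have hcount := hG.2
  omega

end Tight

theorem stmt18_general {V : Type*} [Finite V] (G : SimpleGraph V)
    (ℓ : ℕ) (hG : Tight ℓ G)
    (s : Set V) (hs4 : s.ncard = 4)
    (hK : ∀ a ∈ s, ∀ b ∈ s, a ≠ b → G.Adj a b)
    (htri : ∀ a b c : V, G.Adj a b → G.Adj b c → G.Adj a c →
      (({a, b, c} : Set V) ∩ s).ncard ≠ 2) :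
    (∀ x : V, x ∉ s → ({w ∈ s | G.Adj x w}).ncard ≤ 1) ∧
    Tight ℓ (contractGraph G s) := by
  have hone : ∀ x ∉ s, {w ∈ s | G.Adj x w}.Subsingleton :=
    fun x hx => subsingleton_adj_of_isClique_of_triangle hK htri hx
  exact ⟨fun x hx => Set.ncard_le_one_iff_subsingleton.mpr (hone x hx),
    tight_contractGraph hone hK hs4 hG⟩

theorem stmt18 {V : Type*} [Finite V] (G : SimpleGraph V)
    (ℓ : ℕ) (hℓ : ℓ = 1 ∨ ℓ = 2) (hG : Tight ℓ G)
    (s : Set V) (hs4 : s.ncard = 4)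
    (hK : ∀ a ∈ s, ∀ b ∈ s, a ≠ b → G.Adj a b)
    (htri : ∀ a b c : V, G.Adj a b → G.Adj b c → G.Adj a c →
      (({a, b, c} : Set V) ∩ s).ncard ≠ 2) :
    (∀ x : V, x ∉ s → ({w ∈ s | G.Adj x w}).ncard ≤ 1) ∧
    Tight ℓ (contractGraph G s) :=
  stmt18_general G ℓ hG s hs4 hK htri
end
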